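/- arXiv:1310.0088 — 12 statements merged into one kernel-verified Lean document; each statement's English description precedes it below -/
import Mathlib

section
/- Let d ≥ 1 and let ℓ_0, …, ℓ_{d-1} be a d-symmetric family of linear functionals on ℂ[x]. For 1 ≤ j ≤ d let v^j = Σ_{k=0}^{j-1} g_{j,k} ℓ_k with complex coefficients g_{j,k} and g_{j,j-1} ≠ 0. Then for every n ≥ 0 and every μ with 0 ≤ μ ≤ j-2, if v^{μ+1}(x^μ) ≠ 0 one has v^j(x^{(d+1)n+μ}) = (v^j(x^μ) / v^{μ+1}(x^μ)) · v^{μ+1}(x^{(d+1)n+μ}). -/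
open Polynomial

def IsDSymmetric {R : Type*} [CommSemiring R] (d : ℕ) (ℓ : ℕ → (R[X] →ₗ[R] R)) : Prop :=
  ∀ n ν μ : ℕ, ν < d → μ ≤ d → ν ≠ μ → ℓ ν (X ^ ((d + 1) * n + μ)) = 0

theorem IsDSymmetric.sum_smul_apply_X_pow {R : Type*} [CommSemiring R] {d : ℕ}
    {ℓ : ℕ → (R[X] →ₗ[R] R)} (hℓ : IsDSymmetric d ℓ) (c : ℕ → R) {j μ : ℕ}
    (hμj : μ < j) (hjd : j ≤ d) (n : ℕ) :
    (∑ k ∈ Finset.range j, c k • ℓ k) (X ^ ((d + 1) * n + μ)) =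
      c μ * ℓ μ (X ^ ((d + 1) * n + μ)) := by
  rw [LinearMap.sum_apply, Finset.sum_eq_single_of_mem μ (Finset.mem_range.mpr hμj)]
  · rfl
  · intro k hk hkμ
    rw [LinearMap.smul_apply, hℓ n k μ (by simp at hk; omega) (by omega) hkμ, smul_zero]

theorem stmt_0_general (d : ℕ)
    (ℓ : ℕ → (Polynomial ℂ →ₗ[ℂ] ℂ))
    (hsym : ∀ (n ν μ : ℕ), ν < d → μ ≤ d → ν ≠ μ →
      ℓ ν (X ^ ((d + 1) * n + μ)) = 0)
    (g : ℕ → ℕ → ℂ) (v : ℕ → (Polynomial ℂ →ₗ[ℂ] ℂ))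
    (hv : ∀ j, 1 ≤ j → j ≤ d → v j = ∑ k ∈ Finset.range j, g j k • ℓ k) :
    ∀ (j n μ : ℕ), 1 ≤ j → j ≤ d → μ + 2 ≤ j →
      v (μ + 1) (X ^ μ) ≠ 0 →
      v j (X ^ ((d + 1) * n + μ)) =
        v j (X ^ μ) / v (μ + 1) (X ^ μ) * v (μ + 1) (X ^ ((d + 1) * n + μ)) := by
  rintro j n μ - hjd hμj hne
  have hv_apply : ∀ i m, μ < i → i ≤ d →
      v i (X ^ ((d + 1) * m + μ)) = g i μ * ℓ μ (X ^ ((d + 1) * m + μ)) := fun i m hμi hid => by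
    rw [hv i (by omega) hid]
    exact IsDSymmetric.sum_smul_apply_X_pow hsym (g i) hμi hid m
  have hX : (X : ℂ[X]) ^ μ = X ^ ((d + 1) * 0 + μ) := by rw [mul_zero, zero_add]
  rw [hX] at hne ⊢
  rw [hv_apply (μ + 1) 0 (by omega) (by omega)] at hne ⊢
  rw [hv_apply j n (by omega) hjd, hv_apply j 0 (by omega) hjd,
    hv_apply (μ + 1) n (by omega) (by omega), div_mul_eq_mul_div, eq_div_iff hne]
  ring

/-- Lemma 2.1(i) of the paper: for a `d`-symmetric family of linear
functionals `ℓ 0, …, ℓ (d-1)` on `ℂ[x]` and combinations `v j = ∑_{k<j} g j k • ℓ k`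
with `g j (j-1) ≠ 0`, for all `n ≥ 0` and `0 ≤ μ ≤ j - 2`, if `v (μ+1) (x^μ) ≠ 0` then
`v j (x^{(d+1)n+μ}) = (v j (x^μ) / v (μ+1) (x^μ)) · v (μ+1) (x^{(d+1)n+μ})`. -/
theorem stmt_0 (d : ℕ) (hd : 1 ≤ d)
    (ℓ : ℕ → (Polynomial ℂ →ₗ[ℂ] ℂ))
    (hsym : ∀ (n ν μ : ℕ), ν < d → μ ≤ d → ν ≠ μ →
      ℓ ν (X ^ ((d + 1) * n + μ)) = 0)
    (g : ℕ → ℕ → ℂ) (v : ℕ → (Polynomial ℂ →ₗ[ℂ] ℂ))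
    (hv : ∀ j, 1 ≤ j → j ≤ d → v j = ∑ k ∈ Finset.range j, g j k • ℓ k)
    (hg : ∀ j, 1 ≤ j → j ≤ d → g j (j - 1) ≠ 0) :
    ∀ (j n μ : ℕ), 1 ≤ j → j ≤ d → μ + 2 ≤ j →
      v (μ + 1) (X ^ μ) ≠ 0 →
      v j (X ^ ((d + 1) * n + μ)) =
        v j (X ^ μ) / v (μ + 1) (X ^ μ) * v (μ + 1) (X ^ ((d + 1) * n + μ)) :=
  stmt_0_general d ℓ hsym g v hv
end

section
/- Let d ≥ 1 and let (S_n)_{n≥0} be a sequence of complex polynomials satisfying the high-order recurrence x·S_{n+d}(x) = S_{n+d+1}(x) + γ_{n+1}·S_n(x) for all n ≥ 0, together with S_n(x) = x^n for 0 ≤ n ≤ d. Define the column vectors 𝒮_n = (S_{nd}, S_{nd+1}, …, S_{(n+1)d-1}). Then x·𝒮_0 = A·𝒮_1 + B·𝒮_0, and for every n ≥ 1: x·𝒮_n = A·𝒮_{n+1} + B·𝒮_n + C_n·𝒮_{n-1}, where A is the d×d matrix whose only nonzero entry is a 1 in the bottom-left corner, B is the d×d matrix with ones on the superdiagonal and zeros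 elsewhere, and C_n = diag(γ_{(n-1)d+1}, γ_{(n-1)d+2}, …, γ_{nd}). -/
/-!
Row `i` of the `n`-th block equation is the scalar recurrence at index `(n - 1) d + i`:
the corner matrix `A` and the superdiagonal `B` together just pick out the next polynomial
`S (n d + i + 1)` of the flat sequence, and `C n` contributes `γ ((n - 1) d + i + 1) S ((n - 1) d + i)`.
For `n = 0` the recurrence is replaced by `X · X^i = X^(i+1)`, valid since `i + 1 ≤ d`.
-/

open Polynomial

section BlockMatrices

variable {R M : Type*} [Semiring R] [AddCommMonoid M] [Module R M] {d : ℕ}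

theorem sum_superdiag_smul (f : Fin d → M) (i : Fin d) :
    ∑ j : Fin d, (if (j : ℕ) = (i : ℕ) + 1 then (1 : R) else 0) • f j =
      if h : (i : ℕ) + 1 < d then f ⟨i + 1, h⟩ else 0 := by
  split_ifs with h
  · rw [Finset.sum_eq_single ⟨i + 1, h⟩ (fun j _ hj => by simp [Fin.val_ne_of_ne hj])
      (by simp)]
    simp
  · exact Finset.sum_eq_zero fun j _ => by simp [show (j : ℕ) ≠ i + 1 by omega]

theorem sum_corner_smul (f : Fin d → M) (i : Fin d) :
    ∑ j : Fin d, (if (i : ℕ) = d - 1 ∧ (j : ℕ) = 0 then (1 : R) else 0) • f j =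
      if (i : ℕ) = d - 1 then f ⟨0, i.pos⟩ else 0 := by
  split_ifs with h
  · rw [Finset.sum_eq_single ⟨0, i.pos⟩ (fun j _ hj => by simp [Fin.val_ne_of_ne hj])
      (by simp)]
    simp [h]
  · simp [h]

theorem sum_corner_smul_add_sum_superdiag_smul (g : ℕ → M) (n : ℕ) (i : Fin d) :
    (∑ j : Fin d, (if (i : ℕ) = d - 1 ∧ (j : ℕ) = 0 then (1 : R) else 0) • g ((n + 1) * d + j)) +
      ∑ j : Fin d, (if (j : ℕ) = (i : ℕ) + 1 then (1 : R) else 0) • g (n * d + j) =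
      g (n * d + i + 1) := by
  rw [sum_corner_smul (fun j : Fin d => g ((n + 1) * d + j)),
    sum_superdiag_smul (fun j : Fin d => g (n * d + j))]
  have hi := i.isLt
  split_ifs with h₁ h₂ h₂
  · omega
  · rw [add_zero]; congr 1; simp only [add_mul, one_mul, add_zero]; omega
  · rw [zero_add, add_assoc]
  · omega

theorem sum_diag_smul (f : Fin d → M) (c : R) (i : Fin d) :
    ∑ j : Fin d, (if i = j then c else 0) • f j = c • f i := by
  simp only [ite_smul, zero_smul, Finset.sum_ite_eq, Finset.mem_univ, if_true]

end BlockMatrices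

theorem stmt_4_general (d : ℕ) (γ : ℕ → ℂ) (S : ℕ → Polynomial ℂ)
    (hrec : ∀ n : ℕ, X * S (n + d) = S (n + d + 1) + γ (n + 1) • S n)
    (hinit : ∀ n ≤ d, S n = X ^ n) :
    (∀ i : Fin d, X * S ((0 : ℕ) * d + (i : ℕ)) =
        (∑ j : Fin d,
          (if (i : ℕ) = d - 1 ∧ (j : ℕ) = 0 then (1 : ℂ) else 0) • S (1 * d + (j : ℕ))) +
        ∑ j : Fin d, (if (j : ℕ) = (i : ℕ) + 1 then (1 : ℂ) else 0) • S ((0:ℕ) * d + (j : ℕ))) ∧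
    (∀ n : ℕ, 1 ≤ n → ∀ i : Fin d, X * S (n * d + (i : ℕ)) =
        (∑ j : Fin d,
          (if (i : ℕ) = d - 1 ∧ (j : ℕ) = 0 then (1 : ℂ) else 0) • S ((n + 1) * d + (j : ℕ))) +
        (∑ j : Fin d, (if (j : ℕ) = (i : ℕ) + 1 then (1 : ℂ) else 0) • S (n * d + (j : ℕ))) +
        ∑ j : Fin d,
          (if i = j then γ ((n - 1) * d + (i : ℕ) + 1) else 0) • S ((n - 1) * d + (j : ℕ))) := by
  constructor
  · intro i
    have hshift := sum_corner_smul_add_sum_superdiag_smul (R := ℂ) S 0 i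
    rw [zero_add] at hshift
    rw [hshift, hinit _ (by omega), hinit _ (by omega), zero_mul, zero_add, pow_succ']
  · rintro n hn i
    obtain ⟨m, rfl⟩ : ∃ m, n = m + 1 := ⟨n - 1, by omega⟩
    have hrec' := hrec (m * d + i)
    rw [show m * d + i + d = (m + 1) * d + i by ring] at hrec'
    rw [sum_corner_smul_add_sum_superdiag_smul, sum_diag_smul, Nat.add_sub_cancel, hrec']

/-- Conversion of the high-order recurrence
`x·S (n+d) = S (n+d+1) + γ (n+1) • S n`, with `S n = x^n` for `n ≤ d`, into the
matrix three-term recurrence `x·𝒮 n = A·𝒮 (n+1) + B·𝒮 n + C n·𝒮 (n-1)` for the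
vectors `𝒮 n = (S (nd), …, S ((n+1)d - 1))`, where `A` has a single `1` in the
bottom-left corner, `B` has ones on the superdiagonal, and
`C n = diag(γ ((n-1)d+1), …, γ (nd))`. -/
theorem stmt_4 (d : ℕ) (hd : 1 ≤ d) (γ : ℕ → ℂ) (S : ℕ → Polynomial ℂ)
    (hrec : ∀ n : ℕ, X * S (n + d) = S (n + d + 1) + γ (n + 1) • S n)
    (hinit : ∀ n ≤ d, S n = X ^ n) :
    (∀ i : Fin d, X * S ((0 : ℕ) * d + (i : ℕ)) =
        (∑ j : Fin d,
          (if (i : ℕ) = d - 1 ∧ (j : ℕ) = 0 then (1 : ℂ) else 0) • S (1 * d + (j : ℕ))) +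
        ∑ j : Fin d, (if (j : ℕ) = (i : ℕ) + 1 then (1 : ℂ) else 0) • S ((0:ℕ) * d + (j : ℕ))) ∧
    (∀ n : ℕ, 1 ≤ n → ∀ i : Fin d, X * S (n * d + (i : ℕ)) =
        (∑ j : Fin d,
          (if (i : ℕ) = d - 1 ∧ (j : ℕ) = 0 then (1 : ℂ) else 0) • S ((n + 1) * d + (j : ℕ))) +
        (∑ j : Fin d, (if (j : ℕ) = (i : ℕ) + 1 then (1 : ℂ) else 0) • S (n * d + (j : ℕ))) +
        ∑ j : Fin d,
          (if i = j then γ ((n - 1) * d + (i : ℕ) + 1) else 0) • S ((n - 1) * d + (j : ℕ))) :=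
  stmt_4_general d γ S hrec hinit
end

section
/- Let d ≥ 1 and let (S_n)_{n≥0} be monic complex polynomials with deg S_n = n such that for every n ≥ 0 the polynomial x·S_n − S_{n+1} lies in the linear span of S_{max(0,n−d)}, …, S_n, and for n ≥ d the coefficient of S_{n−d} in this expansion is nonzero (i.e., (S_n) is d-orthogonal, satisfying a (d+2)-term recurrence). Then (S_n) is d-symmetric if and only if there exist nonzero complex numbers (γ_k)_{k≥1} such that x·S_{n+d}(x) = S_{n+d+1}(x) + γ_{n+1}·S_n(x) for all n ≥ 0 and S_n(x) = x^n for 0 ≤ n ≤ d. -/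
open Polynomial

private lemma coeff_top_aux (S : ℕ → Polynomial ℂ)
    (hmonic : ∀ n, (S n).Monic) (hdeg : ∀ n, (S n).natDegree = n)
    (m n : ℕ) (hm : m ≤ n) (f : ℕ → ℂ) (h : (∑ k ∈ Finset.Icc m n, f k • S k) = 0) :
    f n = 0 := by
  have h2 := congrArg (fun p => Polynomial.coeff p n) h
  simp only [Polynomial.finset_sum_coeff, Polynomial.coeff_smul, smul_eq_mul,
    Polynomial.coeff_zero] at h2
  rw [Finset.sum_eq_single n] at h2
  · have hc1 : (S n).coeff n = 1 := by
      have := (hmonic n).coeff_natDegree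
      rwa [hdeg n] at this
    rwa [hc1, mul_one] at h2
  · intro b hb hbn
    have hlt : (S b).natDegree < n := by
      rw [hdeg]; exact lt_of_le_of_ne (Finset.mem_Icc.mp hb).2 hbn
    rw [Polynomial.coeff_eq_zero_of_natDegree_lt hlt, mul_zero]
  · intro hn; exact absurd (Finset.mem_Icc.mpr ⟨hm, le_refl n⟩) hn

private lemma indep_aux (S : ℕ → Polynomial ℂ)
    (hmonic : ∀ n, (S n).Monic) (hdeg : ∀ n, (S n).natDegree = n) :
    ∀ (n m : ℕ) (f : ℕ → ℂ), (∑ k ∈ Finset.Icc m n, f k • S k) = 0 →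
      ∀ k ∈ Finset.Icc m n, f k = 0 := by
  intro n
  induction n with
  | zero =>
    intro m f h k hk
    rw [Finset.mem_Icc] at hk
    obtain ⟨hm, hk0⟩ := hk
    have hk0' : k = 0 := Nat.le_zero.mp hk0
    subst hk0'
    exact coeff_top_aux S hmonic hdeg m 0 hm f h
  | succ n ih =>
    intro m f h k hk
    rw [Finset.mem_Icc] at hk
    have hm : m ≤ n + 1 := le_trans hk.1 hk.2
    have hfn : f (n + 1) = 0 := coeff_top_aux S hmonic hdeg m (n + 1) hm f h
    rcases Nat.eq_or_lt_of_le hk.2 with rfl | hlt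
    · exact hfn
    · have hkn : k ≤ n := Nat.lt_succ_iff.mp hlt
      rw [Finset.sum_Icc_succ_top hm, hfn, zero_smul, add_zero] at h
      exact ih m f h k (Finset.mem_Icc.mpr ⟨hk.1, hkn⟩)

/-- Equivalence (b) ⇔ (c) of the Douak–Maroni theorem (Theorem 2.1
of the paper): a monic `d`-orthogonal sequence `(S n)` with `deg S n = n`, satisfying a
`(d+2)`-term recurrence `x·S n = S (n+1) + ∑_{max(0,n-d) ≤ k ≤ n} c n k • S k` with
`c n (n-d) ≠ 0` for `n ≥ d`, is `d`-symmetric iff there are nonzero `γ k` with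
`x·S (n+d) = S (n+d+1) + γ (n+1) • S n` for all `n` and `S n = x^n` for `n ≤ d`. -/
theorem stmt_6 (d : ℕ) (hd : 1 ≤ d) (S : ℕ → Polynomial ℂ)
    (hmonic : ∀ n, (S n).Monic) (hdeg : ∀ n, (S n).natDegree = n)
    (c : ℕ → ℕ → ℂ)
    (hrec : ∀ n, X * S n = S (n + 1) + ∑ k ∈ Finset.Icc (n - d) n, c n k • S k)
    (hc : ∀ n, d ≤ n → c n (n - d) ≠ 0) :
    (∀ n : ℕ, ∀ ξ : ℂ, ξ ^ (d + 1) = 1 → (S n).comp (C ξ * X) = ξ ^ n • S n) ↔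
      ∃ γ : ℕ → ℂ, (∀ k, 1 ≤ k → γ k ≠ 0) ∧
        (∀ n : ℕ, X * S (n + d) = S (n + d + 1) + γ (n + 1) • S n) ∧
        (∀ n ≤ d, S n = X ^ n) := by
  constructor
  · -- (b) ⇒ (c)
    intro hsym
    have hd1 : (d + 1 : ℕ) ≠ 0 := Nat.succ_ne_zero d
    obtain ⟨ξ, hprim⟩ : ∃ ξ : ℂ, IsPrimitiveRoot ξ (d + 1) :=
      ⟨_, Complex.isPrimitiveRoot_exp (d + 1) hd1⟩
    have hξ1 : ξ ^ (d + 1) = 1 := hprim.pow_eq_one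
    have hξ0 : ξ ≠ 0 := hprim.ne_zero hd1
    have hs : ∀ j : ℕ, (S j).comp (C ξ * X) = ξ ^ j • S j := fun j => hsym j ξ hξ1
    -- key vanishing of the middle coefficients
    have hkey : ∀ n, ∀ k ∈ Finset.Icc (n - d) n, ¬ ((d + 1) ∣ (n + 1 - k)) → c n k = 0 := by
      intro n k hk hndvd
      have hcomp := congrArg (fun p => p.comp (C ξ * X)) (hrec n)
      simp only [Polynomial.mul_comp, Polynomial.add_comp, Polynomial.X_comp,
        Polynomial.sum_comp, Polynomial.smul_comp, hs] at hcomp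
      have e2 : C ξ * X * (ξ ^ n • S n) =
          ξ ^ (n + 1) • S (n + 1) + ∑ j ∈ Finset.Icc (n - d) n, c n j • (ξ ^ (n + 1) • S j) := by
        calc C ξ * X * (ξ ^ n • S n) = ξ ^ (n + 1) • (X * S n) := by
              rw [smul_eq_C_mul, smul_eq_C_mul, pow_succ, map_mul]; ring
          _ = _ := by
              rw [hrec n, smul_add, Finset.smul_sum]
              congr 1
              exact Finset.sum_congr rfl fun j _ => (smul_comm _ _ _)
      have e3 : ∑ j ∈ Finset.Icc (n - d) n, c n j • (ξ ^ (n + 1) • S j) =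
          ∑ j ∈ Finset.Icc (n - d) n, c n j • (ξ ^ j • S j) :=
        add_left_cancel (e2.symm.trans hcomp)
      have hsum0 : ∑ j ∈ Finset.Icc (n - d) n, (c n j * (ξ ^ (n + 1) - ξ ^ j)) • S j = 0 := by
        have : ∀ j ∈ Finset.Icc (n - d) n,
            (c n j * (ξ ^ (n + 1) - ξ ^ j)) • S j
              = c n j • (ξ ^ (n + 1) • S j) - c n j • (ξ ^ j • S j) := by
          intro j _
          rw [smul_smul, smul_smul, ← sub_smul, mul_sub]
        rw [Finset.sum_congr rfl this, Finset.sum_sub_distrib, e3, sub_self]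
      have hzero := indep_aux S hmonic hdeg n (n - d) _ hsum0 k hk
      have hkn : k ≤ n := (Finset.mem_Icc.mp hk).2
      have hne : ξ ^ (n + 1) ≠ ξ ^ k := by
        intro he
        have hpow : ξ ^ k * ξ ^ (n + 1 - k) = ξ ^ k * 1 := by
          rw [← pow_add, mul_one, show k + (n + 1 - k) = n + 1 by omega, he]
        have h1 : ξ ^ (n + 1 - k) = 1 := mul_left_cancel₀ (pow_ne_zero k hξ0) hpow
        exact hndvd ((hprim.pow_eq_one_iff_dvd _).mp h1)
      exact (mul_eq_zero.mp hzero).resolve_right (sub_ne_zero_of_ne hne)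
    -- for n < d the recurrence degenerates to X * S n = S (n+1)
    have hlow : ∀ n < d, X * S n = S (n + 1) := by
      intro n hn
      rw [hrec n, Finset.sum_eq_zero, add_zero]
      intro j hj
      have hj' := Finset.mem_Icc.mp hj
      rw [hkey n j hj, zero_smul]
      intro hdvd
      have := Nat.le_of_dvd (by omega) hdvd
      omega
    -- for n ≥ d only the extreme term survives
    have hhigh : ∀ n, d ≤ n → X * S n = S (n + 1) + c n (n - d) • S (n - d) := by
      intro n hn
      rw [hrec n]
      congr 1
      apply Finset.sum_eq_single_of_mem (n - d) (Finset.mem_Icc.mpr ⟨le_refl _, by omega⟩)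
      intro j hj hjne
      have hj' := Finset.mem_Icc.mp hj
      rw [hkey n j hj, zero_smul]
      intro hdvd
      have := Nat.le_of_dvd (by omega) hdvd
      omega
    have hxn : ∀ n ≤ d, S n = X ^ n := by
      intro n
      induction n with
      | zero =>
        intro _
        simpa using (hmonic 0).natDegree_eq_zero.mp (hdeg 0)
      | succ n ih =>
        intro hn
        rw [← hlow n (by omega), ih (by omega), pow_succ]
        ring
    refine ⟨fun k => if k = 0 then 1 else c (k - 1 + d) (k - 1), ?_, ?_, hxn⟩
    · intro k hk
      have hk0 : k ≠ 0 := by omega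
      simp only [hk0, if_false]
      have := hc (k - 1 + d) (by omega)
      simpa using this
    · intro n
      have := hhigh (n + d) (by omega)
      simpa using this
  · -- (c) ⇒ (b)
    rintro ⟨γ, hγ0, hγrec, hXn⟩ n ξ hξ
    induction n using Nat.strong_induction_on with
    | _ n ih =>
      by_cases hn : n ≤ d
      · rw [hXn n hn]
        rw [Polynomial.pow_comp, Polynomial.X_comp, mul_pow, ← C_pow, ← smul_eq_C_mul]
      · push_neg at hn
        obtain ⟨m, rfl⟩ : ∃ m, n = m + d + 1 := ⟨n - d - 1, by omega⟩
        have hS : S (m + d + 1) = X * S (m + d) - γ (m + 1) • S m :=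
          eq_sub_of_add_eq (hγrec m).symm
        rw [hS, sub_comp, mul_comp, X_comp, smul_comp, ih (m + d) (by omega),
          ih m (by omega), smul_sub]
        have hm : ξ ^ (m + d + 1) = ξ ^ m := by
          rw [show m + d + 1 = m + (d + 1) by ring, pow_add, hξ, mul_one]
        congr 1
        · rw [smul_eq_C_mul, smul_eq_C_mul, pow_succ, map_mul]; ring
        · rw [smul_smul, smul_smul, hm, mul_comm]
end

section
/- Let d ≥ 1 and let (S_n)_{n≥0} be monic complex polynomials with deg S_n = n such that for every n ≥ 0 the polynomial x·S_n − S_{n+1} lies in the linear span of S_{max(0,n−d)}, …, S_n, and for n ≥ d the coefficient of S_{n−d} in this expansion is nonzero (i.e., (S_n) is d-orthogonal). Let (ℓ_m)_{m≥0} be the dual sequence of (S_n), i.e., linear functionals on ℂ[x] with ℓ_m(S_k) = δ_{mk} for all m, k ≥ 0. Then (S_n) is d-symmetric if and only if ℓ_ν(x^{(d+1)n+μ}) = 0 for all n ≥ 0 and all indices 0 ≤ ν ≤ d−1, 0 ≤ μ ≤ d with ν ≠ μ. -/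
open Polynomial

private lemma spanS_aux (S : ℕ → Polynomial ℂ) (hmonic : ∀ n, (S n).Monic)
    (hdeg : ∀ n, (S n).natDegree = n) :
    ∀ (N : ℕ) (p : Polynomial ℂ), p.natDegree ≤ N → p ∈ Submodule.span ℂ (Set.range S) := by
  intro N
  induction N with
  | zero =>
    intro p hp
    have h0 : S 0 = 1 := (hmonic 0).natDegree_eq_zero.mp (hdeg 0)
    have hpc : p = p.coeff 0 • S 0 := by
      rw [h0, smul_eq_C_mul, mul_one]; exact eq_C_of_natDegree_le_zero hp
    rw [hpc]
    exact Submodule.smul_mem _ _ (Submodule.subset_span ⟨0, rfl⟩)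
  | succ N ih =>
    intro p hp
    have hq : (p - p.coeff (N+1) • S (N+1)).natDegree ≤ N := by
      rw [natDegree_le_iff_coeff_eq_zero]
      intro M hM
      rw [coeff_sub, coeff_smul, smul_eq_mul]
      rcases eq_or_lt_of_le (Nat.succ_le_of_lt hM) with h | h
      · have h1 : (S (N+1)).coeff M = 1 := by
          rw [← h]; have := (hmonic (N+1)).coeff_natDegree; rwa [hdeg] at this
        rw [h1, ← h, mul_one, sub_self]
      · have h1 : p.coeff M = 0 := coeff_eq_zero_of_natDegree_lt (lt_of_le_of_lt hp h)
        have h2 : (S (N+1)).coeff M = 0 := coeff_eq_zero_of_natDegree_lt (by rw [hdeg (N+1)]; exact h)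
        rw [h1, h2, mul_zero, sub_zero]
    have hrepr : p = (p - p.coeff (N+1) • S (N+1)) + p.coeff (N+1) • S (N+1) := by ring
    rw [hrepr]
    exact Submodule.add_mem _ (ih _ hq)
      (Submodule.smul_mem _ _ (Submodule.subset_span ⟨N+1, rfl⟩))

private lemma extS (S : ℕ → Polynomial ℂ) (hmonic : ∀ n, (S n).Monic)
    (hdeg : ∀ n, (S n).natDegree = n) (f g : Polynomial ℂ →ₗ[ℂ] ℂ)
    (h : ∀ n, f (S n) = g (S n)) : ∀ p, f p = g p := by
  intro p
  have hp : p ∈ Submodule.span ℂ (Set.range S) := spanS_aux S hmonic hdeg p.natDegree p le_rfl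
  induction hp using Submodule.span_induction with
  | mem x hx => obtain ⟨n, rfl⟩ := hx; exact h n
  | zero => simp
  | add x y _ _ hx hy => simp [map_add, hx, hy]
  | smul a x _ hx => simp [map_smul, hx]

private lemma hcval_aux (d : ℕ) (S : ℕ → Polynomial ℂ) (c : ℕ → ℕ → ℂ)
    (ℓ : ℕ → (Polynomial ℂ →ₗ[ℂ] ℂ))
    (hrec : ∀ n, X * S n = S (n + 1) + ∑ k ∈ Finset.Icc (n - d) n, c n k • S k)
    (hdual : ∀ m k : ℕ, ℓ m (S k) = if m = k then 1 else 0) :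
    ∀ n k, k ≤ n → n ≤ k + d → ℓ k (X * S n) = c n k := by
  intro n k hk hkd
  have h := congrArg (ℓ k) (hrec n)
  rw [map_add, map_sum] at h
  simp only [map_smul, smul_eq_mul, hdual] at h
  rw [h, if_neg (by omega)]
  simp only [mul_ite, mul_one, mul_zero]
  rw [Finset.sum_ite_eq (Finset.Icc (n-d) n) k (fun j => c n j)]
  rw [if_pos (Finset.mem_Icc.mpr ⟨by omega, hk⟩), zero_add]

private lemma L1_aux (d : ℕ) (S : ℕ → Polynomial ℂ)
    (hmonic : ∀ n, (S n).Monic) (hdeg : ∀ n, (S n).natDegree = n)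
    (c : ℕ → ℕ → ℂ) (ℓ : ℕ → (Polynomial ℂ →ₗ[ℂ] ℂ))
    (hrec : ∀ n, X * S n = S (n + 1) + ∑ k ∈ Finset.Icc (n - d) n, c n k • S k)
    (hdual : ∀ m k : ℕ, ℓ m (S k) = if m = k then 1 else 0) :
    ∀ (k : ℕ) (p : Polynomial ℂ),
      ℓ k (X * p) = (if k = 0 then 0 else ℓ (k-1) p) +
        ∑ m ∈ Finset.Icc k (k+d), c m k * ℓ m p := by
  intro k p
  have key := extS S hmonic hdeg
    ((ℓ k).comp (LinearMap.mulLeft ℂ (X : Polynomial ℂ)))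
    ((if k = 0 then 0 else ℓ (k-1)) + ∑ m ∈ Finset.Icc k (k+d), c m k • ℓ m) ?_ p
  · simpa [LinearMap.mulLeft_apply, LinearMap.add_apply, LinearMap.sum_apply,
      LinearMap.smul_apply, smul_eq_mul, apply_ite (fun f : Polynomial ℂ →ₗ[ℂ] ℂ => f p)]
      using key
  · intro j
    simp only [LinearMap.comp_apply, LinearMap.mulLeft_apply, LinearMap.add_apply,
      LinearMap.sum_apply, LinearMap.smul_apply, smul_eq_mul, LinearMap.zero_apply,
      apply_ite (fun f : Polynomial ℂ →ₗ[ℂ] ℂ => f (S j)), hdual]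
    have h := congrArg (ℓ k) (hrec j)
    rw [map_add, map_sum] at h
    simp only [map_smul, smul_eq_mul, hdual] at h
    rw [h]
    simp only [mul_ite, mul_one, mul_zero]
    rw [Finset.sum_ite_eq (Finset.Icc (j-d) j) k (fun i => c j i),
      Finset.sum_ite_eq' (Finset.Icc k (k+d)) j (fun m => c m k)]
    have hiff : (k ∈ Finset.Icc (j-d) j) ↔ (j ∈ Finset.Icc k (k+d)) := by
      simp only [Finset.mem_Icc]; omega
    rw [if_congr hiff rfl rfl]
    congr 1
    · split_ifs with h1 h2 h3 <;> first | rfl | omega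

set_option maxHeartbeats 1000000 in
/-- Equivalence (a) ⇔ (b) of the Douak–Maroni theorem (Theorem 2.1
of the paper): a monic `d`-orthogonal sequence `(S n)` with `deg S n = n` and dual
sequence `(ℓ m)` (i.e. `ℓ m (S k) = δ_{mk}`) is `d`-symmetric iff
`ℓ ν (x^{(d+1)n+μ}) = 0` for all `n ≥ 0`, `0 ≤ ν ≤ d-1`, `0 ≤ μ ≤ d`, `ν ≠ μ`. -/
theorem stmt_7 (d : ℕ) (hd : 1 ≤ d) (S : ℕ → Polynomial ℂ)
    (hmonic : ∀ n, (S n).Monic) (hdeg : ∀ n, (S n).natDegree = n)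
    (c : ℕ → ℕ → ℂ)
    (hrec : ∀ n, X * S n = S (n + 1) + ∑ k ∈ Finset.Icc (n - d) n, c n k • S k)
    (hc : ∀ n, d ≤ n → c n (n - d) ≠ 0)
    (ℓ : ℕ → (Polynomial ℂ →ₗ[ℂ] ℂ))
    (hdual : ∀ m k : ℕ, ℓ m (S k) = if m = k then 1 else 0) :
    (∀ n : ℕ, ∀ ξ : ℂ, ξ ^ (d + 1) = 1 → (S n).comp (C ξ * X) = ξ ^ n • S n) ↔
      (∀ (n ν μ : ℕ), ν < d → μ ≤ d → ν ≠ μ → ℓ ν (X ^ ((d + 1) * n + μ)) = 0) := by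
  have hS0 : S 0 = 1 := (hmonic 0).natDegree_eq_zero.mp (hdeg 0)
  have hd1 : (d+1 : ℕ) ≠ 0 := by omega
  obtain ⟨ζ, hζ⟩ : ∃ z : ℂ, IsPrimitiveRoot z (d+1) :=
    ⟨_, Complex.isPrimitiveRoot_exp (d+1) hd1⟩
  have hζ1 : ζ ^ (d+1) = 1 := hζ.pow_eq_one
  have hne0 : ∀ ξ : ℂ, ξ ^ (d+1) = 1 → ξ ≠ 0 := by
    intro ξ h h0; rw [h0, zero_pow hd1] at h; exact zero_ne_one h
  have hζd : ζ ≠ 0 := hne0 ζ hζ1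
  have hpowmod : ∀ ξ : ℂ, ξ ^ (d+1) = 1 → ∀ a : ℕ, ξ ^ a = ξ ^ (a % (d+1)) := by
    intro ξ h a
    conv_lhs => rw [← Nat.div_add_mod a (d+1)]
    rw [pow_add, pow_mul, h, one_pow, one_mul]
  have hcompmul : ∀ (ξ : ℂ) (p : Polynomial ℂ),
      (X * p).comp (C ξ * X) = ξ • (X * p.comp (C ξ * X)) := by
    intro ξ p; rw [mul_comp, X_comp, smul_eq_C_mul]; ring
  have hXpowcomp : ∀ (ξ : ℂ) (N : ℕ),
      (X ^ N : Polynomial ℂ).comp (C ξ * X) = ξ ^ N • X ^ N := by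
    intro ξ N; rw [X_pow_comp, mul_pow, ← C_pow, ← smul_eq_C_mul]
  have hsumcomp : ∀ (s : Finset ℕ) (f : ℕ → Polynomial ℂ) (q : Polynomial ℂ),
      (∑ k ∈ s, f k).comp q = ∑ k ∈ s, (f k).comp q := by
    intro s f q; simp [comp_eq_aeval, map_sum]
  constructor
  · intro hsym n ν μ hν hμ hne
    have hQ : ∀ p, ℓ ν (p.comp (C ζ * X)) = ζ ^ ν * ℓ ν p := by
      intro p
      have h := extS S hmonic hdeg
        ((ℓ ν).comp (Polynomial.aeval (C ζ * X)).toLinearMap) ((ζ ^ ν) • ℓ ν) ?_ p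
      · simpa [LinearMap.comp_apply, AlgHom.toLinearMap_apply, ← comp_eq_aeval,
          LinearMap.smul_apply, smul_eq_mul] using h
      · intro j
        simp only [LinearMap.comp_apply, AlgHom.toLinearMap_apply, ← comp_eq_aeval,
          LinearMap.smul_apply, smul_eq_mul]
        rw [hsym j ζ hζ1, map_smul, smul_eq_mul, hdual]
        by_cases h : ν = j
        · subst h; simp
        · simp [h]
    have h1 := hQ (X ^ ((d+1)*n + μ))
    rw [hXpowcomp, map_smul, smul_eq_mul] at h1
    have hmod : ζ ^ ((d+1)*n + μ) = ζ ^ μ := by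
      rw [hpowmod ζ hζ1, Nat.mul_add_mod, Nat.mod_eq_of_lt (by omega)]
    rw [hmod] at h1
    by_contra h0
    exact hne (hζ.pow_inj (by omega) (by omega) (mul_right_cancel₀ h0 h1)).symm
  · intro hmom
    have key : ∀ n : ℕ,
        (∀ ξ : ℂ, ξ ^ (d+1) = 1 → (S n).comp (C ξ * X) = ξ ^ n • S n) ∧
        (∀ ξ : ℂ, ξ ^ (d+1) = 1 → ∀ p : Polynomial ℂ,
            ℓ n (p.comp (C ξ * X)) = ξ ^ n * ℓ n p) ∧
        (∀ k, k ≤ n → n < k + d → c n k = 0) := by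
      intro n
      induction n using Nat.strong_induction_on with
      | _ n ih =>
        have hP : ∀ ξ : ℂ, ξ ^ (d+1) = 1 → (S n).comp (C ξ * X) = ξ ^ n • S n := by
          rcases Nat.eq_zero_or_pos n with rfl | hpos
          · intro ξ hξ; rw [hS0]; simp
          · obtain ⟨m, rfl⟩ : ∃ m, n = m + 1 := ⟨n - 1, by omega⟩
            intro ξ hξ
            have hSm1 : S (m+1) = X * S m - ∑ k ∈ Finset.Icc (m-d) m, c m k • S k := by
              rw [hrec m]; ring
            have hterm : ∀ k ∈ Finset.Icc (m-d) m,
                (c m k • S k).comp (C ξ * X) = ξ ^ (m+1) • (c m k • S k) := by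
              intro k hk
              rw [Finset.mem_Icc] at hk
              rw [smul_comp, (ih k (by omega)).1 ξ hξ]
              by_cases hz : c m k = 0
              · simp [hz]
              · have hle : k + d ≤ m := by
                  by_contra hlt
                  exact hz ((ih m (by omega)).2.2 k hk.2 (by omega))
                have hpow : ξ ^ (m+1) = ξ ^ k := by
                  rw [show m + 1 = k + (d+1) by omega, pow_add, hξ, mul_one]
                rw [hpow]
                exact smul_comm _ _ _
            rw [hSm1, sub_comp, hsumcomp, mul_comp, X_comp, (ih m (by omega)).1 ξ hξ,
              Finset.sum_congr rfl hterm, ← Finset.smul_sum, smul_sub]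
            congr 1
            rw [smul_eq_C_mul, smul_eq_C_mul, C_pow, C_pow]
            ring
        have hQ : ∀ ξ : ℂ, ξ ^ (d+1) = 1 → ∀ p : Polynomial ℂ,
            ℓ n (p.comp (C ξ * X)) = ξ ^ n * ℓ n p := by
          intro ξ hξ
          rcases Nat.lt_or_ge n d with hnd | hnd
          · intro p
            induction p using Polynomial.induction_on' with
            | add p q hp hq => rw [add_comp, map_add, map_add, hp, hq]; ring
            | monomial N a =>
              rw [← C_mul_X_pow_eq_monomial, mul_comp, C_comp, hXpowcomp ξ N]
              simp only [← smul_eq_C_mul, map_smul, smul_eq_mul]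
              by_cases hcN : N % (d+1) = n
              · rw [hpowmod ξ hξ N, hcN]; ring
              · have hL : ℓ n (X ^ N) = 0 := by
                  have h := hmom (N / (d+1)) n (N % (d+1)) hnd
                    (by have := Nat.mod_lt N (show 0 < d+1 by omega); omega)
                    (fun h => hcN h.symm)
                  rwa [Nat.div_add_mod N (d+1)] at h
                rw [hL]; ring
          · have hckn : c n (n-d) ≠ 0 := hc n hnd
            have hL : ∀ p, ℓ (n-d) (X * p) =
                (if n-d = 0 then 0 else ℓ (n-d-1) p) + c n (n-d) * ℓ n p := by
              intro p
              rw [L1_aux d S hmonic hdeg c ℓ hrec hdual (n-d) p]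
              congr 1
              rw [show n - d + d = n by omega]
              exact Finset.sum_eq_single_of_mem n
                (Finset.mem_Icc.mpr ⟨by omega, le_rfl⟩)
                (fun b hb hbn => by
                  rw [Finset.mem_Icc] at hb
                  rw [(ih b (by omega)).2.2 (n-d) hb.1 (by omega), zero_mul])
            intro p
            have hξ0 : ξ ≠ 0 := hne0 ξ hξ
            have e1 : ℓ (n-d) ((X * p).comp (C ξ * X))
                = ξ * ℓ (n-d) (X * p.comp (C ξ * X)) := by
              rw [hcompmul, map_smul, smul_eq_mul]
            have e2 : ℓ (n-d) ((X * p).comp (C ξ * X)) = ξ ^ (n-d) * ℓ (n-d) (X * p) :=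
              (ih (n-d) (by omega)).2.1 ξ hξ (X * p)
            have e3 := hL (p.comp (C ξ * X))
            have e4 := hL p
            have e5 : ξ * (if n-d = 0 then 0 else ℓ (n-d-1) (p.comp (C ξ * X)))
                = ξ ^ (n-d) * (if n-d = 0 then 0 else ℓ (n-d-1) p) := by
              rcases Nat.eq_zero_or_pos (n-d) with hk0 | hk0
              · simp [hk0]
              · rw [if_neg (by omega), if_neg (by omega),
                  (ih (n-d-1) (by omega)).2.1 ξ hξ p,
                  show ξ ^ (n-d) = ξ * ξ ^ (n-d-1) by
                    rw [← pow_succ']; congr 1; omega]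
                ring
            have e6 : ξ * ξ ^ n = ξ ^ (n-d) := by
              rw [← pow_succ', show n + 1 = (n-d) + (d+1) by omega, pow_add, hξ, mul_one]
            have goal' : ξ * (c n (n-d) * ℓ n (p.comp (C ξ * X)))
                = ξ * (c n (n-d) * (ξ ^ n * ℓ n p)) := by
              linear_combination (-ξ) * e3 - e1 + e2 + ξ ^ (n-d) * e4 - e5
                - (c n (n-d) * ℓ n p) * e6
            exact mul_left_cancel₀ hckn (mul_left_cancel₀ hξ0 goal')
        have hA : ∀ k, k ≤ n → n < k + d → c n k = 0 := by
          intro k hkn hknd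
          have hcv := hcval_aux d S c ℓ hrec hdual n k hkn (by omega)
          have h1 : ℓ k ((X * S n).comp (C ζ * X)) = (ζ * ζ ^ n) * ℓ k (X * S n) := by
            rw [hcompmul, hP ζ hζ1, mul_smul_comm, map_smul, map_smul,
              smul_eq_mul, smul_eq_mul]
            ring
          have h2 : ℓ k ((X * S n).comp (C ζ * X)) = ζ ^ k * ℓ k (X * S n) := by
            rcases Nat.lt_or_ge k n with h | h
            · exact (ih k (by omega)).2.1 ζ hζ1 _
            · have hkn' : k = n := by omega
              subst hkn'; exact hQ ζ hζ1 _
          have hneq : ζ * ζ ^ n ≠ ζ ^ k := by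
            rw [← pow_succ']
            intro hEq
            have h3 : ζ ^ k * ζ ^ (n+1-k) = ζ ^ k * 1 := by
              rw [← pow_add, mul_one, show k + (n+1-k) = n+1 by omega, hEq]
            have h4 : ζ ^ (n+1-k) = 1 := mul_left_cancel₀ (pow_ne_zero _ hζd) h3
            have h5 : (d+1) ∣ (n+1-k) := (hζ.pow_eq_one_iff_dvd _).mp h4
            have := Nat.le_of_dvd (by omega) h5
            omega
          have hz : ℓ k (X * S n) = 0 := by
            by_contra h0
            exact hneq (mul_right_cancel₀ h0 (h1.symm.trans h2))
          rw [← hcv, hz]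
        exact ⟨hP, hQ, hA⟩
    intro n ξ hξ
    exact (key n).1 ξ hξ
end

section
/- Let ℓ_0, ℓ_1 be a 2-symmetric family of linear functionals on ℂ[x], and let v^1 = a·ℓ_0 and v^2 = b·ℓ_0 + c·ℓ_1 with complex numbers a ≠ 0 and c ≠ 0. Let (S_n)_{n≥0} be monic complex polynomials with deg S_n = n, S_0 = 1, S_1 = x, satisfying v^1(S_j) = 0 for all j ≥ 1, v^2(S_j) = 0 for all j ≥ 2, v^1(1) ≠ 0 and v^2(S_1) ≠ 0. For m ≥ 0 and i, j ∈ {0,1}, let (R_m)_{ij} be the coefficient of S_j in the unique expansion of x^m S_i in the basis (S_k). Then for every n ≥ 0: R_{3n} = [[v^1(x^{3n})/v^1(1), 0], [0, v^2(x^{3n+1})/v^2(S_1)]]; R_{3n+1} = [[0, v^2(x^{3n+1})/v^2(S_1)], [0, 0]]; and R_{3n+2} = [[0, 0], [v^1(x^{3n+3})/v^1(1), 0]]. -/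
open Polynomial

/-- Theorem 3.1 of the paper, stated coefficientwise: for a
2-symmetric pair `ℓ0, ℓ1`, `v1 = a • ℓ0`, `v2 = b • ℓ0 + c • ℓ1` (`a, c ≠ 0`), and a
monic sequence `(S n)` with `deg S n = n`, `S 0 = 1`, `S 1 = X`, orthogonal in the
type II multiple sense (`v1 (S j) = 0` for `j ≥ 1`, `v2 (S j) = 0` for `j ≥ 2`,
`v1 1 ≠ 0`, `v2 (S 1) ≠ 0`), the Weyl-function coefficients
`(R m) i j = ` (coefficient `r m i j` of `S j` in the expansion of `x^m S i`)
for `i, j ∈ {0,1}` have the stated forms along the residues of `m` mod 3. -/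
theorem stmt_11 (ℓ0 ℓ1 : Polynomial ℂ →ₗ[ℂ] ℂ)
    (hsym : ∀ (n μ : ℕ), μ ≤ 2 →
      (0 ≠ μ → ℓ0 (X ^ (3 * n + μ)) = 0) ∧ (1 ≠ μ → ℓ1 (X ^ (3 * n + μ)) = 0))
    (a b c : ℂ) (ha : a ≠ 0) (hc : c ≠ 0)
    (v1 v2 : Polynomial ℂ →ₗ[ℂ] ℂ)
    (hv1 : v1 = a • ℓ0) (hv2 : v2 = b • ℓ0 + c • ℓ1)
    (S : ℕ → Polynomial ℂ) (hmonic : ∀ n, (S n).Monic)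
    (hdeg : ∀ n, (S n).natDegree = n) (hS0 : S 0 = 1) (hS1 : S 1 = X)
    (ho1 : ∀ j, 1 ≤ j → v1 (S j) = 0) (ho2 : ∀ j, 2 ≤ j → v2 (S j) = 0)
    (hn1 : v1 1 ≠ 0) (hn2 : v2 (S 1) ≠ 0)
    (r : ℕ → ℕ → ℕ → ℂ)
    (hr0 : ∀ m i j, i ≤ 1 → m + i < j → r m i j = 0)
    (hr : ∀ m i, i ≤ 1 →
      X ^ m * S i = ∑ j ∈ Finset.range (m + i + 1), r m i j • S j) :
    ∀ n : ℕ,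
      (!![r (3*n) 0 0, r (3*n) 0 1; r (3*n) 1 0, r (3*n) 1 1] =
        !![v1 (X ^ (3*n)) / v1 1, 0; 0, v2 (X ^ (3*n+1)) / v2 (S 1)]) ∧
      (!![r (3*n+1) 0 0, r (3*n+1) 0 1; r (3*n+1) 1 0, r (3*n+1) 1 1] =
        !![0, v2 (X ^ (3*n+1)) / v2 (S 1); 0, 0]) ∧
      (!![r (3*n+2) 0 0, r (3*n+2) 0 1; r (3*n+2) 1 0, r (3*n+2) 1 1] =
        !![0, 0; v1 (X ^ (3*n+3)) / v1 1, 0]) := by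
  -- expansion under the functionals
  have hX : ∀ (m i : ℕ), i ≤ 1 → X ^ m * S i = X ^ (m + i) := by
    intro m i hi
    interval_cases i
    · simp [hS0]
    · simp [hS1, pow_succ]
  have key : ∀ (v : Polynomial ℂ →ₗ[ℂ] ℂ), (∀ j, 2 ≤ j → v (S j) = 0) →
      ∀ (m i : ℕ), i ≤ 1 →
        v (X ^ (m + i)) = r m i 0 * v (S 0) + r m i 1 * v (S 1) := by
    intro v hv m i hi
    rw [← hX m i hi, hr m i hi, map_sum]
    simp_rw [map_smul, smul_eq_mul]
    have e1 : ∑ j ∈ Finset.range (m + i + 1), r m i j * v (S j)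
        = ∑ j ∈ Finset.range (max (m + i + 1) 2), r m i j * v (S j) := by
      apply Finset.sum_subset (Finset.range_subset_range.2 (le_max_left _ _))
      intro j hj hnj
      simp only [Finset.mem_range, not_lt] at hnj
      rw [hr0 m i j hi (by omega), zero_mul]
    have e2 : ∑ j ∈ Finset.range (max (m + i + 1) 2), r m i j * v (S j)
        = ∑ j ∈ Finset.range 2, r m i j * v (S j) := by
      symm
      apply Finset.sum_subset (Finset.range_subset_range.2 (le_max_right _ _))
      intro j hj hnj
      simp only [Finset.mem_range, not_lt] at hnj
      rw [hv j (by omega), mul_zero]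
    rw [e1, e2, Finset.sum_range_succ, Finset.sum_range_one]
  have hv1S1 : v1 (S 1) = 0 := ho1 1 le_rfl
  have hA : ∀ m i, i ≤ 1 → r m i 0 * v1 1 = v1 (X ^ (m + i)) := by
    intro m i hi
    rw [key v1 (fun j hj => ho1 j (by omega)) m i hi, hS0, hv1S1, mul_zero, add_zero]
  have hB : ∀ m i, i ≤ 1 → r m i 1 * v2 (S 1) = v2 (X ^ (m + i)) - r m i 0 * v2 1 := by
    intro m i hi
    rw [key v2 ho2 m i hi, hS0]; ring
  -- evaluations of the functionals
  have hv1e : ∀ p, v1 p = a * ℓ0 p := fun p => by simp [hv1]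
  have hv2e : ∀ p, v2 p = b * ℓ0 p + c * ℓ1 p := fun p => by simp [hv2]
  have hL0_1 : ∀ k, ℓ0 (X ^ (3 * k + 1)) = 0 := fun k => (hsym k 1 (by omega)).1 (by omega)
  have hL0_2 : ∀ k, ℓ0 (X ^ (3 * k + 2)) = 0 := fun k => (hsym k 2 (by omega)).1 (by omega)
  have hL1_0 : ∀ k, ℓ1 (X ^ (3 * k)) = 0 := fun k => by
    simpa using (hsym k 0 (by omega)).2 (by omega)
  have hL1_2 : ∀ k, ℓ1 (X ^ (3 * k + 2)) = 0 := fun k => (hsym k 2 (by omega)).2 (by omega)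
  have hL1one : ℓ1 1 = 0 := by simpa using hL1_0 0
  have hv2one : v2 1 = b * ℓ0 1 := by rw [hv2e, hL1one, mul_zero, add_zero]
  have hv1one : v1 1 = a * ℓ0 1 := hv1e 1
  -- column-0 entries
  have hr_i0 : ∀ m i, i ≤ 1 → r m i 0 = v1 (X ^ (m + i)) / v1 1 := by
    intro m i hi
    rw [eq_div_iff hn1]; exact hA m i hi
  have hv1_1 : ∀ k, v1 (X ^ (3 * k + 1)) = 0 := fun k => by
    rw [hv1e, hL0_1, mul_zero]
  have hv1_2 : ∀ k, v1 (X ^ (3 * k + 2)) = 0 := fun k => by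
    rw [hv1e, hL0_2, mul_zero]
  have hr_i0_1 : ∀ m i k, i ≤ 1 → m + i = 3 * k + 1 → r m i 0 = 0 := by
    intro m i k hi hmk
    rw [hr_i0 m i hi, hmk, hv1_1, zero_div]
  have hr_i0_2 : ∀ m i k, i ≤ 1 → m + i = 3 * k + 2 → r m i 0 = 0 := by
    intro m i k hi hmk
    rw [hr_i0 m i hi, hmk, hv1_2, zero_div]
  -- r m i 0 * ℓ0 1 = ℓ0 (X^(m+i))  (cancel a)
  have hcanc : ∀ m i, i ≤ 1 → r m i 0 * ℓ0 1 = ℓ0 (X ^ (m + i)) := by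
    intro m i hi
    have h := hA m i hi
    rw [hv1one, hv1e] at h
    apply mul_left_cancel₀ ha
    linear_combination h
  -- column-1 entries
  have hr_i1_0 : ∀ m i k, i ≤ 1 → m + i = 3 * k → r m i 1 = 0 := by
    intro m i k hi hmk
    have h := hB m i hi
    have hc0 := hcanc m i hi
    rw [hmk] at h hc0
    have hv2x : v2 (X ^ (3 * k)) = b * ℓ0 (X ^ (3 * k)) := by
      rw [hv2e, hL1_0, mul_zero, add_zero]
    have : r m i 1 * v2 (S 1) = 0 := by
      rw [h, hv2x, hv2one]
      linear_combination (-b) * hc0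
    exact (mul_eq_zero.1 this).resolve_right hn2
  have hr_i1_2 : ∀ m i k, i ≤ 1 → m + i = 3 * k + 2 → r m i 1 = 0 := by
    intro m i k hi hmk
    have h := hB m i hi
    rw [hmk] at h
    have hv2x : v2 (X ^ (3 * k + 2)) = 0 := by
      rw [hv2e, hL0_2, hL1_2, mul_zero, mul_zero, add_zero]
    have : r m i 1 * v2 (S 1) = 0 := by
      rw [h, hv2x, hr_i0_2 m i k hi hmk, zero_mul, sub_zero]
    exact (mul_eq_zero.1 this).resolve_right hn2
  have hr_i1_1 : ∀ m i k, i ≤ 1 → m + i = 3 * k + 1 →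
      r m i 1 = v2 (X ^ (3 * k + 1)) / v2 (S 1) := by
    intro m i k hi hmk
    have h := hB m i hi
    rw [hmk, hr_i0_1 m i k hi hmk, zero_mul, sub_zero] at h
    rw [eq_div_iff hn2]; exact h
  intro n
  refine ⟨?_, ?_, ?_⟩
  · have h00 : r (3*n) 0 0 = v1 (X ^ (3*n)) / v1 1 := by
      simpa using hr_i0 (3*n) 0 (by omega)
    have h01 : r (3*n) 0 1 = 0 := hr_i1_0 (3*n) 0 n (by omega) (by omega)
    have h10 : r (3*n) 1 0 = 0 := hr_i0_1 (3*n) 1 n (by omega) (by omega)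
    have h11 : r (3*n) 1 1 = v2 (X ^ (3*n+1)) / v2 (S 1) :=
      hr_i1_1 (3*n) 1 n (by omega) (by omega)
    rw [h00, h01, h10, h11]
  · have h00 : r (3*n+1) 0 0 = 0 := hr_i0_1 (3*n+1) 0 n (by omega) (by omega)
    have h01 : r (3*n+1) 0 1 = v2 (X ^ (3*n+1)) / v2 (S 1) :=
      hr_i1_1 (3*n+1) 0 n (by omega) (by omega)
    have h10 : r (3*n+1) 1 0 = 0 := hr_i0_2 (3*n+1) 1 n (by omega) (by omega)
    have h11 : r (3*n+1) 1 1 = 0 := hr_i1_2 (3*n+1) 1 n (by omega) (by omega)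
    rw [h00, h01, h10, h11]
  · have h00 : r (3*n+2) 0 0 = 0 := hr_i0_2 (3*n+2) 0 n (by omega) (by omega)
    have h01 : r (3*n+2) 0 1 = 0 := hr_i1_2 (3*n+2) 0 n (by omega) (by omega)
    have h10 : r (3*n+2) 1 0 = v1 (X ^ (3*n+3)) / v1 1 := by
      have := hr_i0 (3*n+2) 1 (by omega)
      rw [show 3*n+2+1 = 3*n+3 by omega] at this
      exact this
    have h11 : r (3*n+2) 1 1 = 0 := hr_i1_0 (3*n+2) 1 (n+1) (by omega) (by omega)
    rw [h00, h01, h10, h11]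
end

section
/- Let d ≥ 1, let (γ_k)_{k≥1} be complex numbers, and let (S_n)_{n≥0} be complex polynomials satisfying x·S_{n+d}(x) = S_{n+d+1}(x) + γ_{n+1}·S_n(x) for all n ≥ 0 with S_n(x) = x^n for 0 ≤ n ≤ d. Suppose that for 1 ≤ j ≤ d+1 and n ≥ 0 there are polynomials A_n^j with S_{(d+1)n+j-1}(x) = x^{j-1}·A_n^j(x^{d+1}). Then for every j with 1 ≤ j ≤ d and every n ≥ 1: A_n^j(x) = A_n^{j+1}(x) + γ_{(d+1)(n-1)+j+1}·A_{n-1}^{j+1}(x). -/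
open Polynomial

/-!
Write `n = m + 1` and `j = i + 1`. The recurrence at index `(d+1)m + i + 1` relates
`S ((d+1)(m+1) + i)`, `S ((d+1)(m+1) + i + 1)` and `S ((d+1)m + i + 1)`, which by the
decomposition are `X^i`, `X^(i+1)` and `X^(i+1)` times `A (m+1) (i+1)`, `A (m+1) (i+2)`
and `A m (i+2)` evaluated at `X^(d+1)`. After multiplying the first by `X`, the common
factor `X^(i+1)` cancels (`X` is regular) and so does the substitution `X ↦ X^(d+1)`
(`expand` is injective).
-/

theorem Polynomial.eq_of_X_pow_mul_comp_X_pow_eq {R : Type*} [CommSemiring R] {k n : ℕ}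
    (hn : 0 < n) {p q : R[X]} (h : X ^ k * p.comp (X ^ n) = X ^ k * q.comp (X ^ n)) :
    p = q :=
  (expand_inj hn).mp ((isRegular_X_pow k).left h)

theorem stmt_12_general (d : ℕ) (γ : ℕ → ℂ) (S : ℕ → Polynomial ℂ)
    (hrec : ∀ n : ℕ, X * S (n + d) = S (n + d + 1) + γ (n + 1) • S n)
    (A : ℕ → ℕ → Polynomial ℂ)
    (hA : ∀ n j : ℕ, 1 ≤ j → j ≤ d + 1 →
      S ((d + 1) * n + j - 1) = X ^ (j - 1) * (A n j).comp (X ^ (d + 1))) :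
    ∀ n j : ℕ, 1 ≤ j → j ≤ d → 1 ≤ n →
      A n j = A n (j + 1) + γ ((d + 1) * (n - 1) + j + 1) • A (n - 1) (j + 1) := by
  intro n j hj hjd hn
  obtain ⟨m, rfl⟩ : ∃ m, n = m + 1 := ⟨n - 1, by omega⟩
  obtain ⟨i, rfl⟩ : ∃ i, j = i + 1 := ⟨j - 1, by omega⟩
  have hS : ∀ n i, i ≤ d → S ((d + 1) * n + i) = X ^ i * (A n (i + 1)).comp (X ^ (d + 1)) :=
    fun n i hi => by simpa using hA n (i + 1) (by omega) (by omega)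
  have hrec' := hrec ((d + 1) * m + i + 1)
  rw [show (d + 1) * m + i + 1 + d = (d + 1) * (m + 1) + i by ring,
    show (d + 1) * (m + 1) + i + 1 = (d + 1) * (m + 1) + (i + 1) by ring,
    show (d + 1) * m + i + 1 = (d + 1) * m + (i + 1) by ring,
    hS _ i (by omega), hS _ (i + 1) hjd, hS _ (i + 1) hjd, ← mul_assoc, ← pow_succ',
    ← mul_smul_comm, ← mul_add, ← smul_comp, ← add_comp] at hrec'
  simpa using eq_of_X_pow_mul_comp_X_pow_eq d.succ_pos hrec'

/-- The first `d` equations of system (4.3) of the paper: if `(S n)`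
satisfies `x·S (n+d) = S (n+d+1) + γ (n+1) • S n` with `S n = x^n` for `n ≤ d`, and
`S ((d+1)n + j - 1) = x^(j-1) · A n j (x^(d+1))` for `1 ≤ j ≤ d+1`, then for
`1 ≤ j ≤ d` and `n ≥ 1`:
`A n j = A n (j+1) + γ ((d+1)(n-1) + j + 1) • A (n-1) (j+1)`. -/
theorem stmt_12 (d : ℕ) (hd : 1 ≤ d) (γ : ℕ → ℂ) (S : ℕ → Polynomial ℂ)
    (hrec : ∀ n : ℕ, X * S (n + d) = S (n + d + 1) + γ (n + 1) • S n)
    (hinit : ∀ n ≤ d, S n = X ^ n)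
    (A : ℕ → ℕ → Polynomial ℂ)
    (hA : ∀ n j : ℕ, 1 ≤ j → j ≤ d + 1 →
      S ((d + 1) * n + j - 1) = X ^ (j - 1) * (A n j).comp (X ^ (d + 1))) :
    ∀ n j : ℕ, 1 ≤ j → j ≤ d → 1 ≤ n →
      A n j = A n (j + 1) + γ ((d + 1) * (n - 1) + j + 1) • A (n - 1) (j + 1) :=
  stmt_12_general d γ S hrec A hA
end

section
/- Let d ≥ 1, let (γ_k)_{k≥1} be complex numbers, and let (S_n)_{n≥0} be complex polynomials satisfying x·S_{n+d}(x) = S_{n+d+1}(x) + γ_{n+1}·S_n(x) for all n ≥ 0 with S_n(x) = x^n for 0 ≤ n ≤ d. Suppose that for 1 ≤ j ≤ d+1 and n ≥ 0 there are polynomials A_n^j with S_{(d+1)n+j-1}(x) = x^{j-1}·A_n^j(x^{d+1}). Then for every n ≥ 0: x·A_n^{d+1}(x) = A_{n+1}^1(x) + γ_{(d+1)n+1}·A_n^1(x). Consequently, if A_n^1(0) ≠ 0 then γ_{(d+1)n+1} = −A_{n+1}^1(0)/A_n^1(0). -/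
/-!
Writing `S_{(d+1)n+j} = x^j A_n^{j+1}(x^{d+1})`, the recurrence at index `(d+1)n` reads
`x^{d+1} A_n^{d+1}(x^{d+1}) = A_{n+1}^1(x^{d+1}) + γ_{(d+1)n+1} A_n^1(x^{d+1})`, i.e. the
claimed identity after the substitution `x ↦ x^{d+1}`, which is injective on polynomials.
Evaluating the identity at `0` gives the formula for `γ`.
-/

open Polynomial

namespace Polynomial

theorem X_mul_eq_add_smul_of_comp_X_pow {R : Type*} [CommSemiring R] {k : ℕ} (hk : 0 < k)
    {a b e : R[X]} {c : R}
    (h : X ^ k * a.comp (X ^ k) = b.comp (X ^ k) + c • e.comp (X ^ k)) :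
    X * a = b + c • e := by
  apply expand_injective hk
  rw [map_mul, expand_X, map_add, map_smul]
  exact h

theorem eq_neg_div_of_X_mul_eq_add_smul {K : Type*} [Field K] {a b e : K[X]} {c : K}
    (h : X * a = b + c • e) (he : e.eval 0 ≠ 0) :
    c = -b.eval 0 / e.eval 0 := by
  have h0 : 0 = b.eval 0 + c * e.eval 0 := by simpa using congrArg (eval 0) h
  field_simp
  linear_combination -h0

end Polynomial

theorem stmt_13_general (d : ℕ) (γ : ℕ → ℂ) (S : ℕ → Polynomial ℂ)
    (hrec : ∀ n : ℕ, X * S (n + d) = S (n + d + 1) + γ (n + 1) • S n)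
    (A : ℕ → ℕ → Polynomial ℂ)
    (hA : ∀ n j : ℕ, 1 ≤ j → j ≤ d + 1 →
      S ((d + 1) * n + j - 1) = X ^ (j - 1) * (A n j).comp (X ^ (d + 1))) :
    ∀ n : ℕ,
      (X * A n (d + 1) = A (n + 1) 1 + γ ((d + 1) * n + 1) • A n 1) ∧
      ((A n 1).eval 0 ≠ 0 →
        γ ((d + 1) * n + 1) = -((A (n + 1) 1).eval 0) / (A n 1).eval 0) := by
  intro n
  have hfirst : ∀ m, S ((d + 1) * m) = (A m 1).comp (X ^ (d + 1)) :=
    fun m => by simpa using hA m 1 le_rfl (by omega)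
  have hlast : S ((d + 1) * n + d) = X ^ d * (A n (d + 1)).comp (X ^ (d + 1)) := by
    simpa using hA n (d + 1) (by omega) le_rfl
  have hrec_n := hrec ((d + 1) * n)
  rw [hlast, show (d + 1) * n + d + 1 = (d + 1) * (n + 1) by ring, hfirst, hfirst, ← mul_assoc,
    ← pow_succ'] at hrec_n
  have hmain := X_mul_eq_add_smul_of_comp_X_pow d.succ_pos hrec_n
  exact ⟨hmain, eq_neg_div_of_X_mul_eq_add_smul hmain⟩

/-- The `(d+1)`-st equation of system (4.3) of the paper, and the
resulting formula for `γ`: with `(S n)` and the decomposition polynomials `A n j` as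
in Statement 12, for every `n ≥ 0` one has
`x·A n (d+1) = A (n+1) 1 + γ ((d+1)n + 1) • A n 1`, and if `A n 1 (0) ≠ 0` then
`γ ((d+1)n + 1) = - A (n+1) 1 (0) / A n 1 (0)`. -/
theorem stmt_13 (d : ℕ) (hd : 1 ≤ d) (γ : ℕ → ℂ) (S : ℕ → Polynomial ℂ)
    (hrec : ∀ n : ℕ, X * S (n + d) = S (n + d + 1) + γ (n + 1) • S n)
    (hinit : ∀ n ≤ d, S n = X ^ n)
    (A : ℕ → ℕ → Polynomial ℂ)
    (hA : ∀ n j : ℕ, 1 ≤ j → j ≤ d + 1 →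
      S ((d + 1) * n + j - 1) = X ^ (j - 1) * (A n j).comp (X ^ (d + 1))) :
    ∀ n : ℕ,
      (X * A n (d + 1) = A (n + 1) 1 + γ ((d + 1) * n + 1) • A n 1) ∧
      ((A n 1).eval 0 ≠ 0 →
        γ ((d + 1) * n + 1) = -((A (n + 1) 1).eval 0) / (A n 1).eval 0) :=
  stmt_13_general d γ S hrec A hA
end

section
/- Let d ≥ 1 and let (S_n)_{n≥0} be complex polynomials satisfying x·S_{n+d}(x) = S_{n+d+1}(x) + γ_{n+1}·S_n(x) for all n ≥ 0, with S_n(x) = x^n for 0 ≤ n ≤ d and γ_k ≠ 0 for all k ≥ 1. For 1 ≤ j ≤ d+1 and n ≥ 0 let A_n^j be the (unique) polynomials with S_{(d+1)n+j-1}(x) = x^{j-1}·A_n^j(x^{d+1}). Then for each j ∈ {1,…,d+1} there exist complex numbers b_n^{[j]} (n ≥ 0) and c_{n,k}^{[j]} (n ≥ 0, 1 ≤ k ≤ d) such that, setting A_m^j = 0 for m < 0, x·A_n^j(x) = A_{n+1}^j(x) + b_n^{[j]}·A_n^j(x) + Σ_{k=1}^{d} c_{n,k}^{[j]}·A_{n-k}^j(x)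 for all n ≥ 0, with c_{n,d}^{[j]} ≠ 0 for all n ≥ d. In particular each (A_n^j)_{n≥0} satisfies a (d+2)-term recurrence relation and is therefore a type II multiple orthogonal polynomial sequence. -/
open Polynomial

section StmtAux
open Finset

private lemma aux_expand (d : ℕ) (γ : ℕ → ℂ) (S : ℕ → Polynomial ℂ)
    (hγ : ∀ k, 1 ≤ k → γ k ≠ 0)
    (hrec : ∀ n : ℕ, X * S (n + d) = S (n + d + 1) + γ (n + 1) • S n)
    (hinit : ∀ n ≤ d, S n = X ^ n) (t m : ℕ) :
    ∃ C : ℕ → ℂ, C 0 = 1 ∧ (∀ k, t < k → C k = 0) ∧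
      (∀ k, m + t < (d + 1) * k → C k = 0) ∧
      (t * d ≤ m → C t ≠ 0) ∧
      X ^ t * S m = ∑ k ∈ Finset.range (t + 1),
        C k • (if (d + 1) * k ≤ m + t then S (m + t - (d + 1) * k) else 0) := by
  induction t with
  | zero =>
    refine ⟨fun k => if k = 0 then 1 else 0, by simp, ?_, ?_, by simp, by simp⟩
    · intro k hk
      have : k ≠ 0 := by omega
      simp [this]
    · intro k hk
      have : k ≠ 0 := by rintro rfl; simp at hk
      simp [this]
  | succ t ih =>
    obtain ⟨C, hC0, hCtop, hCneg, hCext, hCsum⟩ := ih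
    set D : ℕ → ℂ := fun k =>
      if 1 ≤ k ∧ (d+1)*(k-1) + d ≤ m + t then
        C (k-1) * γ (m + t - ((d+1)*(k-1) + d) + 1) else 0 with hD
    have hD0 : D 0 = 0 := by simp [hD]
    have hDsucc : ∀ k, D (k+1) =
        if (d+1)*k + d ≤ m + t then C k * γ (m + t - ((d+1)*k + d) + 1) else 0 := by
      intro k; simp [hD]
    refine ⟨fun k => C k + D k, ?_, ?_, ?_, ?_, ?_⟩
    · simp [hC0, hD0]
    · intro k hk
      match k, hk with
      | k'+1, hk =>
        have h1 : C (k'+1) = 0 := hCtop _ (by omega)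
        have h2 : D (k'+1) = 0 := by
          rw [hDsucc]
          have : C k' = 0 := hCtop _ (by omega)
          simp [this]
        simp [h1, h2]
    · intro k hk
      have h1 : C k = 0 := hCneg _ (by omega)
      have h2 : D k = 0 := by
        match k with
        | 0 => exact hD0
        | k'+1 =>
          rw [hDsucc]
          have he : (d+1)*(k'+1) = (d+1)*k' + d + 1 := by ring
          have : ¬ ((d+1)*k' + d ≤ m + t) := by omega
          simp [this]
      simp [h1, h2]
    · intro hm
      have h1 : C (t+1) = 0 := hCtop _ (by omega)
      have hcond : (d+1)*t + d ≤ m + t := by nlinarith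
      have h2 : D (t+1) = C t * γ (m + t - ((d+1)*t + d) + 1) := by
        rw [hDsucc]; simp [hcond]
      show C (t+1) + D (t+1) ≠ 0
      rw [h1, h2, zero_add]
      exact mul_ne_zero (hCext (by nlinarith)) (hγ _ (by omega))
    · have key : ∀ k ∈ Finset.range (t+1),
          C k • (X * (if (d + 1) * k ≤ m + t then S (m + t - (d + 1) * k) else 0)) =
          C k • (if (d + 1) * k ≤ m + (t+1) then S (m + (t+1) - (d + 1) * k) else 0)
          + D (k+1) • (if (d + 1) * (k+1) ≤ m + (t+1) then S (m + (t+1) - (d + 1) * (k+1)) else 0) := by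
        intro k _
        have he : (d+1)*(k+1) = (d+1)*k + d + 1 := by ring
        by_cases h1 : (d+1)*k ≤ m + t
        · by_cases h2 : (d+1)*k + d ≤ m + t
          · set p : ℕ := m + t - (d+1)*k with hp
            have hpd : d ≤ p := by omega
            have hrec' : X * S p = S (p+1) + γ (p - d + 1) • S (p - d) := by
              have := hrec (p - d)
              rwa [Nat.sub_add_cancel hpd] at this
            have e1 : (d+1)*k ≤ m + (t+1) := by omega
            have e2 : m + (t+1) - (d+1)*k = p + 1 := by omega
            have e3 : (d+1)*(k+1) ≤ m + (t+1) := by omega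
            have e4 : m + (t+1) - (d+1)*(k+1) = p - d := by omega
            have e5 : D (k+1) = C k * γ (p - d + 1) := by
              rw [hDsucc]; rw [if_pos h2]
              congr 2
              omega
            rw [if_pos h1, if_pos e1, if_pos e3, e2, e4, e5, hrec']
            rw [smul_add, smul_smul]
          · set p : ℕ := m + t - (d+1)*k with hp
            have hpd : p < d := by omega
            have hSp : S p = X ^ p := hinit p (by omega)
            have hSp1 : S (p+1) = X ^ (p+1) := hinit (p+1) (by omega)
            have e1 : (d+1)*k ≤ m + (t+1) := by omega
            have e2 : m + (t+1) - (d+1)*k = p + 1 := by omega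
            have e5 : D (k+1) = 0 := by rw [hDsucc]; simp [h2]
            rw [if_pos h1, if_pos e1, e2, e5, zero_smul, add_zero, hSp, hSp1, ← pow_succ']
        · have h0 : C k = 0 := hCneg _ (by omega)
          have e5 : D (k+1) = 0 := by
            rw [hDsucc]
            have : ¬ ((d+1)*k + d ≤ m + t) := by omega
            simp [this]
          simp [h0, e5]
      have hsplit : ∑ k ∈ Finset.range (t + 1 + 1),
          (C k + D k) • (if (d + 1) * k ≤ m + (t + 1) then S (m + (t + 1) - (d + 1) * k) else 0)
          = ∑ k ∈ Finset.range (t + 1 + 1),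
            C k • (if (d + 1) * k ≤ m + (t + 1) then S (m + (t + 1) - (d + 1) * k) else 0)
          + ∑ k ∈ Finset.range (t + 1 + 1),
            D k • (if (d + 1) * k ≤ m + (t + 1) then S (m + (t + 1) - (d + 1) * k) else 0) := by
        rw [← Finset.sum_add_distrib]
        exact Finset.sum_congr rfl fun k _ => add_smul _ _ _
      have hCsplit : ∑ k ∈ Finset.range (t + 1 + 1),
          C k • (if (d + 1) * k ≤ m + (t + 1) then S (m + (t + 1) - (d + 1) * k) else 0)
          = ∑ k ∈ Finset.range (t + 1),
            C k • (if (d + 1) * k ≤ m + (t + 1) then S (m + (t + 1) - (d + 1) * k) else 0) := by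
        rw [Finset.sum_range_succ, hCtop (t+1) (by omega)]
        simp
      have hDsplit : ∑ k ∈ Finset.range (t + 1 + 1),
          D k • (if (d + 1) * k ≤ m + (t + 1) then S (m + (t + 1) - (d + 1) * k) else 0)
          = ∑ k ∈ Finset.range (t + 1),
            D (k+1) • (if (d + 1) * (k+1) ≤ m + (t + 1) then S (m + (t + 1) - (d + 1) * (k+1)) else 0) := by
        rw [Finset.sum_range_succ'
          (fun k => D k • (if (d + 1) * k ≤ m + (t + 1) then S (m + (t + 1) - (d + 1) * k) else 0)) (t+1)]
        simp [hD0]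
      calc X ^ (t+1) * S m = X * (X ^ t * S m) := by ring
        _ = X * ∑ k ∈ Finset.range (t + 1),
            C k • (if (d + 1) * k ≤ m + t then S (m + t - (d + 1) * k) else 0) := by rw [hCsum]
        _ = ∑ k ∈ Finset.range (t + 1),
            C k • (X * (if (d + 1) * k ≤ m + t then S (m + t - (d + 1) * k) else 0)) := by
              rw [Finset.mul_sum]; exact Finset.sum_congr rfl fun k _ => (mul_smul_comm _ _ _)
        _ = ∑ k ∈ Finset.range (t + 1),
            (C k • (if (d + 1) * k ≤ m + (t+1) then S (m + (t+1) - (d + 1) * k) else 0)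
            + D (k+1) • (if (d + 1) * (k+1) ≤ m + (t+1) then S (m + (t+1) - (d + 1) * (k+1)) else 0)) :=
              Finset.sum_congr rfl key
        _ = ∑ k ∈ Finset.range (t + 1),
            C k • (if (d + 1) * k ≤ m + (t+1) then S (m + (t+1) - (d + 1) * k) else 0)
            + ∑ k ∈ Finset.range (t + 1),
            D (k+1) • (if (d + 1) * (k+1) ≤ m + (t+1) then S (m + (t+1) - (d + 1) * (k+1)) else 0) :=
              Finset.sum_add_distrib
        _ = ∑ k ∈ Finset.range (t + 1 + 1),
            (C k + D k) • (if (d + 1) * k ≤ m + (t + 1) then S (m + (t + 1) - (d + 1) * k) else 0) := by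
              rw [hsplit, hCsplit, hDsplit]

private lemma comp_pow_inj (d j : ℕ) {P Q : Polynomial ℂ}
    (h : X ^ j * P.comp (X ^ (d+1)) = X ^ j * Q.comp (X ^ (d+1))) : P = Q := by
  have hX : (X : Polynomial ℂ) ^ j ≠ 0 := pow_ne_zero _ X_ne_zero
  have h2 : P.comp (X ^ (d+1)) = Q.comp (X ^ (d+1)) := mul_left_cancel₀ hX h
  apply Polynomial.funext
  intro y
  obtain ⟨z, hz⟩ := IsAlgClosed.exists_pow_nat_eq y (n := d+1) (by omega)
  have := congrArg (Polynomial.eval z) h2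
  simpa [eval_comp, hz] using this

theorem stmt_14' (d : ℕ) (hd : 1 ≤ d) (γ : ℕ → ℂ) (hγ : ∀ k, 1 ≤ k → γ k ≠ 0)
    (S : ℕ → Polynomial ℂ)
    (hrec : ∀ n : ℕ, X * S (n + d) = S (n + d + 1) + γ (n + 1) • S n)
    (hinit : ∀ n ≤ d, S n = X ^ n)
    (A : ℕ → ℕ → Polynomial ℂ)
    (hA : ∀ n j : ℕ, 1 ≤ j → j ≤ d + 1 →
      S ((d + 1) * n + j - 1) = X ^ (j - 1) * (A n j).comp (X ^ (d + 1))) :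
    ∀ j : ℕ, 1 ≤ j → j ≤ d + 1 →
      ∃ (b : ℕ → ℂ) (c : ℕ → ℕ → ℂ),
        (∀ n, d ≤ n → c n d ≠ 0) ∧
        ∀ n : ℕ, X * A n j = A (n + 1) j + b n • A n j +
          ∑ k ∈ Finset.Icc 1 d, c n k • (if k ≤ n then A (n - k) j else 0) := by
  intro j hj1 hj2
  have haux := fun n => aux_expand d γ S hγ hrec hinit (d+1) ((d+1)*n + j - 1)
  choose C hC0 hCtop hCneg hCext hCsum using haux
  refine ⟨fun n => C n 1, fun n k => C n (k+1), ?_, ?_⟩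
  · intro n hn
    have h1 : (d+1)*d ≤ (d+1)*n := Nat.mul_le_mul_left _ hn
    exact hCext n (by omega)
  · intro n
    set m : ℕ := (d+1)*n + j - 1 with hm
    have hm' : m = (d+1)*n + (j-1) := by omega
    have hterm : ∀ k, (if (d+1)*k ≤ m + (d+1) then S (m + (d+1) - (d+1)*k) else 0)
        = (if k ≤ n+1 then X^(j-1) * (A (n+1-k) j).comp (X^(d+1)) else 0) := by
      intro k
      by_cases h : k ≤ n+1
      · obtain ⟨r, hr⟩ : ∃ r, n+1 = k + r := ⟨n+1-k, by omega⟩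
        have e1 : (d+1)*(n+1) = (d+1)*k + (d+1)*r := by rw [hr]; ring
        have e0 : (d+1)*(n+1) = (d+1)*n + (d+1) := by ring
        have e2 : (d+1)*k ≤ m + (d+1) := by omega
        have e3 : m + (d+1) - (d+1)*k = (d+1)*r + j - 1 := by omega
        have e4 : n + 1 - k = r := by omega
        rw [if_pos e2, if_pos h, e3, e4, hA r j hj1 hj2]
      · rw [if_neg, if_neg h]
        intro hcon
        have h2 : (d+1)*(n+2) ≤ (d+1)*k := Nat.mul_le_mul_left _ (by omega)
        have e1 : (d+1)*(n+2) = (d+1)*n + (d+1) + (d+1) := by ring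
        omega
    have hCsum' : X^(d+1) * S m = ∑ k ∈ Finset.range (d+1+1),
        C n k • (if k ≤ n+1 then X^(j-1) * (A (n+1-k) j).comp (X^(d+1)) else 0) := by
      rw [hCsum n]
      exact Finset.sum_congr rfl fun k _ => by rw [hterm k]
    have hL : X^(d+1) * S m = X^(j-1) * ((X * A n j).comp (X^(d+1))) := by
      rw [hm, hA n j hj1 hj2, mul_comp, X_comp]
      ring
    apply comp_pow_inj d (j-1)
    rw [← hL, hCsum']
    -- now expand the RHS composition
    have hIcc : Finset.Icc 1 d = Finset.Ico 1 (d+1) := by rw [Finset.Ico_add_one_right_eq_Icc]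
    rw [hIcc]
    rw [add_comp, add_comp, smul_comp, Polynomial.sum_comp]
    rw [mul_add, mul_add, mul_smul_comm, Finset.mul_sum]
    rw [Finset.sum_range_succ' _ (d+1), Finset.sum_range_succ' _ d]
    rw [Finset.sum_Ico_eq_sum_range]
    simp only [Nat.add_sub_cancel]
    have t0 : C n 0 • (if 0 ≤ n+1 then X^(j-1) * (A (n+1-0) j).comp (X^(d+1)) else 0)
        = X^(j-1) * (A (n+1) j).comp (X^(d+1)) := by
      rw [hC0 n, if_pos (by omega), one_smul]
      norm_num
    have t1 : C n (0+1) • (if 0+1 ≤ n+1 then X^(j-1) * (A n j).comp (X^(d+1)) else 0)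
        = C n 1 • (X^(j-1) * (A n j).comp (X^(d+1))) := by
      rw [if_pos (by omega)]
    have tsum : ∀ i ∈ Finset.range d,
        X^(j-1) * (C n (1+i+1) • (if 1+i ≤ n then A (n-(1+i)) j else 0)).comp (X^(d+1))
        = C n (i+1+1) • (if i+1+1 ≤ n+1 then X^(j-1) * (A (n+1-(i+1+1)) j).comp (X^(d+1)) else 0) := by
      intro i _
      rw [Nat.add_comm 1 i]
      rw [Polynomial.smul_comp, mul_smul_comm]
      congr 1
      by_cases h : i+1 ≤ n
      · rw [if_pos h, if_pos (by omega)]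
        have : n + 1 - (i+1+1) = n - (i+1) := by omega
        rw [this]
      · rw [if_neg h, if_neg (by omega), zero_comp, mul_zero]
    rw [Finset.sum_congr rfl tsum, t0, t1]
    abel

end StmtAux

/-- Theorem 4.2 of the paper (the inverse symmetrization problem):
if `(S n)` satisfies `x·S (n+d) = S (n+d+1) + γ (n+1) • S n` with `S n = x^n` for
`n ≤ d` and all `γ k ≠ 0`, and `S ((d+1)n + j - 1) = x^(j-1) · A n j (x^(d+1))`, then
each component sequence `(A n j)` (for `1 ≤ j ≤ d+1`) satisfies a `(d+2)`-term
recurrence `x·A n j = A (n+1) j + b n • A n j + ∑_{k=1}^{d} c n k • A (n-k) j`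
(with `A m j := 0` for `m < 0`) whose extreme coefficient `c n d` is nonzero for
`n ≥ d`. -/
theorem stmt_14 (d : ℕ) (hd : 1 ≤ d) (γ : ℕ → ℂ) (hγ : ∀ k, 1 ≤ k → γ k ≠ 0)
    (S : ℕ → Polynomial ℂ)
    (hrec : ∀ n : ℕ, X * S (n + d) = S (n + d + 1) + γ (n + 1) • S n)
    (hinit : ∀ n ≤ d, S n = X ^ n)
    (A : ℕ → ℕ → Polynomial ℂ)
    (hA : ∀ n j : ℕ, 1 ≤ j → j ≤ d + 1 →
      S ((d + 1) * n + j - 1) = X ^ (j - 1) * (A n j).comp (X ^ (d + 1))) :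
    ∀ j : ℕ, 1 ≤ j → j ≤ d + 1 →
      ∃ (b : ℕ → ℂ) (c : ℕ → ℕ → ℂ),
        (∀ n, d ≤ n → c n d ≠ 0) ∧
        ∀ n : ℕ, X * A n j = A (n + 1) j + b n • A n j +
          ∑ k ∈ Finset.Icc 1 d, c n k • (if k ≤ n then A (n - k) j else 0) := by
  exact stmt_14' d hd γ hγ S hrec hinit A hA
end

section
/- Let d ≥ 1, let (γ_k)_{k≥1} be nonzero complex numbers, and for 1 ≤ j ≤ d+1 let (A_n^j)_{n≥0} be sequences of monic complex polynomials with deg A_n^j = n (so A_0^j = 1), satisfying: A_n^j(x) = A_n^{j+1}(x) + γ_{(d+1)(n-1)+j+1}·A_{n-1}^{j+1}(x) for all 1 ≤ j ≤ d and n ≥ 1, and x·A_n^{d+1}(x) = A_{n+1}^1(x) + γ_{(d+1)n+1}·A_n^1(x) for all n ≥ 0. Define S_{(d+1)n+j}(x) = x^j·A_n^{j+1}(x^{d+1}) for n ≥ 0 and 0 ≤ j ≤ d. Then (S_n)_{n≥0} is a d-symmetric sequence of polynomials satisfying x·S_{n+d}(x) = S_{n+d+1}(x) + γ_{n+1}·S_n(x)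 for all n ≥ 0, with S_n(x) = x^n for 0 ≤ n ≤ d. -/
open Polynomial

/-- Theorem 4.1 of the paper (the symmetrization problem): given
nonzero `γ k` and monic sequences `A n j` (`1 ≤ j ≤ d+1`, `deg A n j = n`) satisfying
the Darboux-factorization relations
`A n j = A n (j+1) + γ ((d+1)(n-1)+j+1) • A (n-1) (j+1)` (`1 ≤ j ≤ d`, `n ≥ 1`) and
`x·A n (d+1) = A (n+1) 1 + γ ((d+1)n+1) • A n 1`, the interlaced sequence
`S ((d+1)n + j) = x^j · A n (j+1) (x^(d+1))` satisfies the high-order recurrence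
`x·S (n+d) = S (n+d+1) + γ (n+1) • S n` with `S n = x^n` for `n ≤ d`, and is
`d`-symmetric. -/
theorem stmt_15 (d : ℕ) (hd : 1 ≤ d) (γ : ℕ → ℂ) (hγ : ∀ k, 1 ≤ k → γ k ≠ 0)
    (A : ℕ → ℕ → Polynomial ℂ)
    (hmonic : ∀ n j : ℕ, 1 ≤ j → j ≤ d + 1 → (A n j).Monic ∧ (A n j).natDegree = n)
    (h1 : ∀ n j : ℕ, 1 ≤ j → j ≤ d → 1 ≤ n →
      A n j = A n (j + 1) + γ ((d + 1) * (n - 1) + j + 1) • A (n - 1) (j + 1))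
    (h2 : ∀ n : ℕ, X * A n (d + 1) = A (n + 1) 1 + γ ((d + 1) * n + 1) • A n 1)
    (S : ℕ → Polynomial ℂ)
    (hS : ∀ n j : ℕ, j ≤ d →
      S ((d + 1) * n + j) = X ^ j * (A n (j + 1)).comp (X ^ (d + 1))) :
    (∀ n : ℕ, X * S (n + d) = S (n + d + 1) + γ (n + 1) • S n) ∧
    (∀ n ≤ d, S n = X ^ n) ∧
    (∀ n : ℕ, ∀ ξ : ℂ, ξ ^ (d + 1) = 1 → (S n).comp (C ξ * X) = ξ ^ n • S n) := by
  refine ⟨?_, ?_, ?_⟩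
  · intro n
    obtain ⟨q, j, hj, rfl⟩ : ∃ q j, j ≤ d ∧ n = (d + 1) * q + j :=
      ⟨n / (d + 1), n % (d + 1), Nat.lt_succ_iff.mp (Nat.mod_lt _ (by omega)),
        (Nat.div_add_mod n (d + 1)).symm⟩
    rcases Nat.eq_zero_or_pos j with rfl | hj1
    · have i1 : (d + 1) * q + 0 + d = (d + 1) * q + d := by omega
      have i2 : (d + 1) * q + d + 1 = (d + 1) * (q + 1) + 0 := by ring
      have i3 : (d + 1) * q + 0 = (d + 1) * q + 0 := rfl
      rw [i1, i2, hS q d le_rfl, hS (q + 1) 0 (by omega), hS q 0 (by omega)]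
      have key : (X * A q (d + 1)).comp (X ^ (d + 1)) =
          ((A (q + 1) 1) + γ ((d + 1) * q + 1) • A q 1).comp (X ^ (d + 1)) := by
        rw [h2 q]
      simp only [mul_comp, add_comp, smul_comp, X_comp, C_comp, smul_eq_C_mul] at key ⊢
      have hγi : ((d + 1) * q + 0 + 1) = ((d + 1) * q + 1) := by omega
      rw [hγi]
      linear_combination key
    · obtain ⟨j', rfl⟩ : ∃ j', j = j' + 1 := ⟨j - 1, by omega⟩
      have i1 : (d + 1) * q + (j' + 1) + d = (d + 1) * (q + 1) + j' := by ring
      have i2 : (d + 1) * (q + 1) + j' + 1 = (d + 1) * (q + 1) + (j' + 1) := by omega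
      rw [i1, i2, hS (q + 1) j' (by omega), hS (q + 1) (j' + 1) (by omega),
        hS q (j' + 1) (by omega)]
      have key := h1 (q + 1) (j' + 1) (by omega) (by omega) (by omega)
      simp only [Nat.add_sub_cancel] at key
      rw [key]
      simp only [add_comp, mul_comp, smul_comp, C_comp, smul_eq_C_mul]
      ring
  · intro n hn
    have h := hS 0 n hn
    simp only [Nat.mul_zero, Nat.zero_add] at h
    obtain ⟨hm, hdeg⟩ := hmonic 0 (n + 1) (by omega) (by omega)
    rw [h, hm.natDegree_eq_zero.mp hdeg, one_comp, mul_one]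
  · intro m ξ hξ
    obtain ⟨q, j, hj, rfl⟩ : ∃ q j, j ≤ d ∧ m = (d + 1) * q + j :=
      ⟨m / (d + 1), m % (d + 1), Nat.lt_succ_iff.mp (Nat.mod_lt _ (by omega)),
        (Nat.div_add_mod m (d + 1)).symm⟩
    rw [hS q j hj]
    have hpow : (C ξ * X : Polynomial ℂ) ^ (d + 1) = X ^ (d + 1) := by
      rw [mul_pow, ← C_pow, hξ, map_one, one_mul]
    rw [mul_comp, pow_comp, X_comp, comp_assoc, pow_comp, X_comp, hpow]
    rw [show ξ ^ ((d + 1) * q + j) = ξ ^ j by rw [pow_add, pow_mul, hξ, one_pow, one_mul]]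
    rw [smul_eq_C_mul, mul_pow, ← C_pow]
    ring
end

section
/- Let (P_n)_{n≥0} be monic complex polynomials with deg P_n = n, P_0 = 1, satisfying (with P_{-1} = P_{-2} = 0) the four-term recurrence x·P_n(x) = P_{n+1}(x) + β_n·P_n(x) + γ^1_n·P_{n-1}(x) + γ^0_{n-1}·P_{n-2}(x) for all n ≥ 0, for complex sequences β_n, γ^1_n, γ^0_n. For each n ≥ 0 let W_n be the unique 3×3 matrix of complex polynomials such that P_{3n+i}(x) = Σ_{k=0}^{2} x^k·(W_n)_{i,k}(x^3) for i = 0, 1, 2. Then there exist 3×3 complex matrices A_n, B_n, C_n, D_n for n ≥ 1, with each A_n lower triangular with ones on the main diagonal and each D_n upper triangular, such that (with W_{-1} = 0) x·W_n(x) = A_n·W_{n+1}(x) + B_n·W_n(x) + C_n·W_{n-1}(x) + D_n·W_{n-2}(x) for all n ≥ 1, as an identity of 3×3 matrices of polynomials. -/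
open Polynomial

section Aux

noncomputable def eAux (β γ1 γ0 : ℕ → ℂ) (j l : ℕ) : ℂ :=
  (if l = j + 1 then 1 else 0) + (if l = j then β j else 0) +
  (if 1 ≤ j ∧ l + 1 = j then γ1 j else 0) + (if 2 ≤ j ∧ l + 2 = j then γ0 (j - 1) else 0)

lemma eAux_support {β γ1 γ0 : ℕ → ℂ} {j l : ℕ} (h : l + 2 < j ∨ j + 1 < l) :
    eAux β γ1 γ0 j l = 0 := by
  unfold eAux
  rw [if_neg (by omega), if_neg (by omega), if_neg (by omega), if_neg (by omega)]
  ring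

lemma single_sum (P : ℕ → Polynomial ℂ) (N t : ℕ) (a : ℂ) (ht : t < N) :
    ∑ l ∈ Finset.range N, (if l = t then a else 0) • P l = a • P t := by
  rw [Finset.sum_eq_single t]
  · simp
  · intro b _ hb; rw [if_neg hb, zero_smul]
  · intro hmem; exact absurd (Finset.mem_range.2 ht) hmem

lemma step_lemma (P : ℕ → Polynomial ℂ) (β γ1 γ0 : ℕ → ℂ)
    (hrec : ∀ n : ℕ, X * P n = P (n + 1) + β n • P n +
      (if 1 ≤ n then γ1 n • P (n - 1) else 0) +
      (if 2 ≤ n then γ0 (n - 1) • P (n - 2) else 0))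
    (h j : ℕ) (hj : j ≤ h) :
    X * P j = ∑ l ∈ Finset.range (h + 2), eAux β γ1 γ0 j l • P l := by
  rw [hrec j]
  unfold eAux
  simp only [add_smul, Finset.sum_add_distrib]
  congr 1
  congr 1
  congr 1
  · rw [single_sum P (h+2) (j+1) 1 (by omega), one_smul]
  · rw [single_sum P (h+2) j (β j) (by omega)]
  · by_cases h1 : 1 ≤ j
    · rw [if_pos h1]
      have hc : ∀ l, (if 1 ≤ j ∧ l + 1 = j then γ1 j else 0) = (if l = j - 1 then γ1 j else 0) := by
        intro l
        by_cases hl : l = j - 1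
        · rw [if_pos (by omega), if_pos hl]
        · rw [if_neg (by omega), if_neg hl]
      simp only [hc]
      rw [single_sum P (h+2) (j-1) (γ1 j) (by omega)]
    · rw [if_neg h1]
      symm; apply Finset.sum_eq_zero
      intro l _; rw [if_neg (by omega), zero_smul]
  · by_cases h2 : 2 ≤ j
    · rw [if_pos h2]
      have hc : ∀ l, (if 2 ≤ j ∧ l + 2 = j then γ0 (j-1) else 0)
          = (if l = j - 2 then γ0 (j-1) else 0) := by
        intro l
        by_cases hl : l = j - 2
        · rw [if_pos (by omega), if_pos hl]
        · rw [if_neg (by omega), if_neg hl]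
      simp only [hc]
      rw [single_sum P (h+2) (j-2) (γ0 (j-1)) (by omega)]
    · rw [if_neg h2]
      symm; apply Finset.sum_eq_zero
      intro l _; rw [if_neg (by omega), zero_smul]

lemma lift_lemma (P : ℕ → Polynomial ℂ) (β γ1 γ0 : ℕ → ℂ)
    (hrec : ∀ n : ℕ, X * P n = P (n + 1) + β n • P n +
      (if 1 ≤ n then γ1 n • P (n - 1) else 0) +
      (if 2 ≤ n then γ0 (n - 1) • P (n - 2) else 0))
    (h : ℕ) (c : ℕ → ℂ) :
    X * (∑ j ∈ Finset.range (h + 1), c j • P j) =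
      ∑ l ∈ Finset.range (h + 2),
        (∑ j ∈ Finset.range (h + 1), c j * eAux β γ1 γ0 j l) • P l := by
  rw [Finset.mul_sum]
  have h1 : ∀ j ∈ Finset.range (h + 1), X * (c j • P j) =
      ∑ l ∈ Finset.range (h + 2), (c j * eAux β γ1 γ0 j l) • P l := by
    intro j hj
    rw [mul_smul_comm,
      step_lemma P β γ1 γ0 hrec h j (Nat.lt_succ_iff.mp (Finset.mem_range.mp hj)),
      Finset.smul_sum]
    simp [smul_smul]
  rw [Finset.sum_congr rfl h1, Finset.sum_comm]
  simp [Finset.sum_smul]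

lemma Emain (P : ℕ → Polynomial ℂ) (hmonic : ∀ n, (P n).Monic)
    (hdeg : ∀ n, (P n).natDegree = n)
    (β γ1 γ0 : ℕ → ℂ)
    (hrec : ∀ n : ℕ, X * P n = P (n + 1) + β n • P n +
      (if 1 ≤ n then γ1 n • P (n - 1) else 0) +
      (if 2 ≤ n then γ0 (n - 1) • P (n - 2) else 0))
    (m : ℕ) :
    ∃ c : ℕ → ℂ, X ^ 3 * P m = ∑ l ∈ Finset.range (m + 4), c l • P l ∧
      (∀ l, l + 6 < m → c l = 0) ∧ (∀ l, m + 3 < l → c l = 0) ∧ c (m + 3) = 1 := by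
  set c1 : ℕ → ℂ := fun l => eAux β γ1 γ0 m l with hc1
  have e1 : X * P m = ∑ l ∈ Finset.range (m + 2), c1 l • P l :=
    step_lemma P β γ1 γ0 hrec m m le_rfl
  have s1 : ∀ l, l + 2 < m ∨ m + 1 < l → c1 l = 0 := fun l hl => eAux_support hl
  set c2 : ℕ → ℂ := fun l => ∑ j ∈ Finset.range (m + 2), c1 j * eAux β γ1 γ0 j l with hc2
  have e2 : X ^ 2 * P m = ∑ l ∈ Finset.range (m + 3), c2 l • P l := by
    have := lift_lemma P β γ1 γ0 hrec (m + 1) c1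
    rw [← e1] at this
    rw [pow_two, mul_assoc, this]
  have s2 : ∀ l, l + 4 < m ∨ m + 2 < l → c2 l = 0 := by
    intro l hl
    apply Finset.sum_eq_zero
    intro j hj
    rcases le_or_gt j (l + 2) with h' | h'
    · rcases lt_or_ge (j + 1) l with h'' | h''
      · rw [eAux_support (Or.inr h''), mul_zero]
      · rw [s1 j (by omega), zero_mul]
    · rw [eAux_support (Or.inl h'), mul_zero]
  set c3 : ℕ → ℂ := fun l => ∑ j ∈ Finset.range (m + 3), c2 j * eAux β γ1 γ0 j l with hc3
  have e3 : X ^ 3 * P m = ∑ l ∈ Finset.range (m + 4), c3 l • P l := by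
    have := lift_lemma P β γ1 γ0 hrec (m + 2) c2
    rw [← e2] at this
    rw [pow_succ, mul_comm (X^2) X, mul_assoc, e2, ← e2]
    exact this
  have s3 : ∀ l, l + 6 < m ∨ m + 3 < l → c3 l = 0 := by
    intro l hl
    apply Finset.sum_eq_zero
    intro j hj
    rcases le_or_gt j (l + 2) with h' | h'
    · rcases lt_or_ge (j + 1) l with h'' | h''
      · rw [eAux_support (Or.inr h''), mul_zero]
      · rw [s2 j (by omega), zero_mul]
    · rw [eAux_support (Or.inl h'), mul_zero]
  refine ⟨c3, e3, fun l hl => s3 l (Or.inl hl), fun l hl => s3 l (Or.inr hl), ?_⟩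
  have hco : (X ^ 3 * P m).coeff (m + 3) = 1 := by
    have h1 : (X ^ 3 * P m).coeff (m + 3) = (P m).coeff m := by
      rw [mul_comm, Polynomial.coeff_mul_X_pow]
    rw [h1]
    have h2 := (hmonic m).coeff_natDegree
    rwa [hdeg m] at h2
  have hrhs : (∑ l ∈ Finset.range (m + 4), c3 l • P l).coeff (m + 3) = c3 (m + 3) := by
    rw [Polynomial.finset_sum_coeff, Finset.sum_eq_single (m + 3)]
    · rw [Polynomial.coeff_smul]
      have h2 := (hmonic (m+3)).coeff_natDegree
      rw [hdeg (m+3)] at h2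
      rw [h2, smul_eq_mul, mul_one]
    · intro b hb hbne
      rw [Polynomial.coeff_smul, Polynomial.coeff_eq_zero_of_natDegree_lt, smul_zero]
      rw [hdeg b]
      have := Finset.mem_range.mp hb
      omega
    · intro hmem; exact absurd (Finset.mem_range.2 (by omega)) hmem
  rw [e3, hrhs] at hco
  exact hco

lemma cd_coeff (p : Fin 3 → ℂ[X]) (m : ℕ) (k : Fin 3) :
    (∑ k' : Fin 3, X ^ (k' : ℕ) * (p k').comp (X ^ 3)).coeff (3 * m + (k : ℕ))
      = (p k).coeff m := by
  rw [Polynomial.finset_sum_coeff]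
  have h : ∀ k' : Fin 3,
      (X ^ (k' : ℕ) * (p k').comp (X ^ 3)).coeff (3 * m + (k : ℕ)) =
        if k' = k then (p k).coeff m else 0 := by
    intro k'
    rw [← Polynomial.expand_eq_comp_X_pow, Polynomial.coeff_X_pow_mul']
    fin_cases k <;> fin_cases k' <;>
      simp [Polynomial.coeff_expand (by norm_num : 0 < 3)] <;>
      · intros; exfalso; omega
  simp_rw [h]
  simp

lemma cd_uniq (q r : Fin 3 → ℂ[X])
    (h : ∑ k : Fin 3, X ^ (k : ℕ) * (q k).comp (X ^ 3)
       = ∑ k : Fin 3, X ^ (k : ℕ) * (r k).comp (X ^ 3)) (k : Fin 3) : q k = r k := by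
  apply Polynomial.ext
  intro m
  have h1 := cd_coeff q m k
  have h2 := cd_coeff r m k
  rw [h] at h1
  rw [h2] at h1
  exact h1.symm

lemma regroup12 (f : ℕ → ℂ[X]) (k : ℕ) : ∑ l ∈ Finset.range (3*k+12), f l =
    (∑ l ∈ Finset.range (3*k), f l) + (f (3*k) + f (3*k+1) + f (3*k+2))
    + (f (3*k+3) + f (3*k+4) + f (3*k+5)) + (f (3*k+6) + f (3*k+7) + f (3*k+8))
    + (f (3*k+9) + f (3*k+10) + f (3*k+11)) := by
  rw [Finset.sum_range_add]
  simp [Finset.sum_range_succ]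
  ring

lemma regroup9 (f : ℕ → ℂ[X]) : ∑ l ∈ Finset.range 9, f l =
    (f 0 + f 1 + f 2) + (f 3 + f 4 + f 5) + (f 6 + f 7 + f 8) := by
  simp [Finset.sum_range_succ]
  ring

lemma comb_comp (P : ℕ → ℂ[X]) (Wm : Matrix (Fin 3) (Fin 3) ℂ[X]) (M : ℕ)
    (hWM : ∀ j : Fin 3, P (3*M + (j:ℕ)) = ∑ k : Fin 3, X^(k:ℕ) * (Wm j k).comp (X^3))
    (a : Fin 3 → ℂ) :
    ∑ j : Fin 3, a j • P (3*M + (j:ℕ)) =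
      ∑ k : Fin 3, X^(k:ℕ) * ((∑ j : Fin 3, a j • Wm j k).comp (X^3)) := by
  simp_rw [hWM, Finset.smul_sum]
  rw [Finset.sum_comm]
  apply Finset.sum_congr rfl
  intro k _
  have h1 : (∑ j : Fin 3, a j • Wm j k).comp (X^3) = ∑ j : Fin 3, a j • (Wm j k).comp (X^3) := by
    simp [Polynomial.comp, Polynomial.eval₂_finset_sum, Polynomial.smul_eq_C_mul]
  rw [h1, Finset.mul_sum]
  apply Finset.sum_congr rfl
  intro j _
  rw [mul_smul_comm]

lemma Xmul_comp (P : ℕ → ℂ[X]) (Wm : Matrix (Fin 3) (Fin 3) ℂ[X]) (M : ℕ) (i : Fin 3)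
    (hWM : P (3*M + (i:ℕ)) = ∑ k : Fin 3, X^(k:ℕ) * (Wm i k).comp (X^3)) :
    X^3 * P (3*M + (i:ℕ)) = ∑ k : Fin 3, X^(k:ℕ) * ((X * Wm i k).comp (X^3)) := by
  rw [hWM, Finset.mul_sum]
  apply Finset.sum_congr rfl
  intro k _
  rw [Polynomial.mul_comp, Polynomial.X_comp, mul_left_comm]

end Aux

/-- Theorem 5.1 of the paper: if the monic sequence `(P n)`
(`deg P n = n`, `P 0 = 1`) satisfies the four-term recurrence
`x·P n = P (n+1) + β n • P n + γ1 n • P (n-1) + γ0 (n-1) • P (n-2)` (terms with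
negative index omitted), and `W n` are the 3×3 matrix polynomials of the cubic
decomposition `P (3n + i) = ∑_{k<3} x^k · (W n) i k (x^3)`, then there exist matrix
coefficients `A n` (lower triangular with unit diagonal), `B n`, `Cm n`, `D n`
(upper triangular) such that
`x·W n = A n · W (n+1) + B n · W n + Cm n · W (n-1) + D n · W (n-2)` for all
`n ≥ 1` (with `W (-1) = 0`). -/
theorem stmt_16 (P : ℕ → Polynomial ℂ) (hmonic : ∀ n, (P n).Monic)
    (hdeg : ∀ n, (P n).natDegree = n) (hP0 : P 0 = 1)
    (β γ1 γ0 : ℕ → ℂ)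
    (hrec : ∀ n : ℕ, X * P n = P (n + 1) + β n • P n +
      (if 1 ≤ n then γ1 n • P (n - 1) else 0) +
      (if 2 ≤ n then γ0 (n - 1) • P (n - 2) else 0))
    (W : ℕ → Matrix (Fin 3) (Fin 3) (Polynomial ℂ))
    (hW : ∀ n : ℕ, ∀ i : Fin 3, P (3 * n + (i : ℕ)) =
      ∑ k : Fin 3, X ^ (k : ℕ) * (W n i k).comp (X ^ 3)) :
    ∃ A B Cm D : ℕ → Matrix (Fin 3) (Fin 3) ℂ,
      (∀ n : ℕ, 1 ≤ n →
        (∀ i : Fin 3, A n i i = 1) ∧ (∀ i j : Fin 3, i < j → A n i j = 0) ∧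
        (∀ i j : Fin 3, j < i → D n i j = 0)) ∧
      (∀ n : ℕ, 1 ≤ n →
        (X : ℂ[X]) • W n = (A n).map C * W (n + 1) + (B n).map C * W n +
          (Cm n).map C * W (n - 1) + (D n).map C * (if 2 ≤ n then W (n - 2) else 0)) := by
  classical
  choose c hc1 hc2 hc3 hc4 using fun m => Emain P hmonic hdeg β γ1 γ0 hrec m
  refine ⟨fun n => Matrix.of fun i j : Fin 3 => c (3*n + (i:ℕ)) (3*(n+1) + (j:ℕ)),
      fun n => Matrix.of fun i j : Fin 3 => c (3*n + (i:ℕ)) (3*n + (j:ℕ)),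
      fun n => Matrix.of fun i j : Fin 3 => c (3*n + (i:ℕ)) (3*(n-1) + (j:ℕ)),
      fun n => Matrix.of fun i j : Fin 3 =>
        if 2 ≤ n then c (3*n + (i:ℕ)) (3*(n-2) + (j:ℕ)) else 0, ?_, ?_⟩
  · intro n hn
    refine ⟨fun i => ?_, fun i j hij => ?_, fun i j hji => ?_⟩
    · show c (3*n + (i:ℕ)) (3*(n+1) + (i:ℕ)) = 1
      have he : 3*(n+1) + (i:ℕ) = (3*n + (i:ℕ)) + 3 := by ring
      rw [he]
      exact hc4 _
    · show c (3*n + (i:ℕ)) (3*(n+1) + (j:ℕ)) = 0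
      have hij' : (i:ℕ) < (j:ℕ) := hij
      exact hc3 _ _ (by omega)
    · show (if 2 ≤ n then c (3*n + (i:ℕ)) (3*(n-2) + (j:ℕ)) else 0) = 0
      by_cases h2 : 2 ≤ n
      · rw [if_pos h2]
        have hji' : (j:ℕ) < (i:ℕ) := hji
        exact hc2 _ _ (by omega)
      · rw [if_neg h2]
  · intro n hn
    -- the scalar identity
    have scalar : ∀ i : Fin 3, X^3 * P (3*n + (i:ℕ)) =
        (∑ j : Fin 3, c (3*n + (i:ℕ)) (3*(n+1) + (j:ℕ)) • P (3*(n+1) + (j:ℕ)))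
        + (∑ j : Fin 3, c (3*n + (i:ℕ)) (3*n + (j:ℕ)) • P (3*n + (j:ℕ)))
        + (∑ j : Fin 3, c (3*n + (i:ℕ)) (3*(n-1) + (j:ℕ)) • P (3*(n-1) + (j:ℕ)))
        + (if 2 ≤ n then
            ∑ j : Fin 3, c (3*n + (i:ℕ)) (3*(n-2) + (j:ℕ)) • P (3*(n-2) + (j:ℕ)) else 0) := by
      intro i
      set m := 3*n + (i:ℕ) with hm
      rw [hc1 m]
      have hext : ∑ l ∈ Finset.range (m+4), c m l • P l
          = ∑ l ∈ Finset.range (3*n+6), c m l • P l := by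
        apply Finset.sum_subset (Finset.range_subset_range.2 (by omega))
        intro x hx hx'
        rw [hc3 m x (by simp only [Finset.mem_range] at hx hx'; omega), zero_smul]
      rw [hext]
      by_cases hn2 : 2 ≤ n
      · obtain ⟨k, rfl⟩ : ∃ k, n = k + 2 := ⟨n - 2, by omega⟩
        rw [if_pos hn2]
        have h12 : 3*(k+2)+6 = 3*k+12 := by ring
        rw [h12, regroup12]
        have hz : ∑ l ∈ Finset.range (3*k), c m l • P l = 0 := by
          apply Finset.sum_eq_zero
          intro x hx
          rw [hc2 m x (by simp only [Finset.mem_range] at hx; omega), zero_smul]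
        rw [hz, zero_add]
        simp only [Fin.sum_univ_three, Fin.val_zero, Fin.val_one, Fin.val_two]
        have e1 : 3*(k+2+1) + 0 = 3*k+9 := by ring
        have e2 : 3*(k+2+1) + 1 = 3*k+10 := by ring
        have e3 : 3*(k+2+1) + 2 = 3*k+11 := by ring
        have e4 : 3*(k+2) + 0 = 3*k+6 := by ring
        have e5 : 3*(k+2) + 1 = 3*k+7 := by ring
        have e6 : 3*(k+2) + 2 = 3*k+8 := by ring
        have e7 : 3*(k+2-1) + 0 = 3*k+3 := by omega
        have e8 : 3*(k+2-1) + 1 = 3*k+4 := by omega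
        have e9 : 3*(k+2-1) + 2 = 3*k+5 := by omega
        have e10 : 3*(k+2-2) + 0 = 3*k := by omega
        have e11 : 3*(k+2-2) + 1 = 3*k+1 := by omega
        have e12 : 3*(k+2-2) + 2 = 3*k+2 := by omega
        rw [e1, e2, e3, e4, e5, e6, e7, e8, e9, e10, e11, e12]
        ring
      · have hn1 : n = 1 := by omega
        subst hn1
        rw [if_neg hn2]
        have h9 : 3*1+6 = 9 := by norm_num
        rw [h9, regroup9]
        simp only [Fin.sum_univ_three, Fin.val_zero, Fin.val_one, Fin.val_two]
        norm_num
        ring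
    -- convert to matrix identity entrywise
    by_cases hn2 : 2 ≤ n
    · rw [if_pos hn2]
      refine Matrix.ext fun i k => ?_
      have key : X * W n i k =
          (∑ j : Fin 3, c (3*n + (i:ℕ)) (3*(n+1) + (j:ℕ)) • W (n+1) j k)
          + (∑ j : Fin 3, c (3*n + (i:ℕ)) (3*n + (j:ℕ)) • W n j k)
          + (∑ j : Fin 3, c (3*n + (i:ℕ)) (3*(n-1) + (j:ℕ)) • W (n-1) j k)
          + (∑ j : Fin 3, c (3*n + (i:ℕ)) (3*(n-2) + (j:ℕ)) • W (n-2) j k) := by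
        apply cd_uniq (fun k => X * W n i k) (fun k => _ + _ + _ + _)
        rw [← Xmul_comp P (W n) n i (hW n i)]
        rw [scalar i, if_pos hn2]
        rw [comb_comp P (W (n+1)) (n+1) (hW (n+1)) _,
          comb_comp P (W n) n (hW n) _,
          comb_comp P (W (n-1)) (n-1) (hW (n-1)) _,
          comb_comp P (W (n-2)) (n-2) (hW (n-2)) _]
        rw [← Finset.sum_add_distrib, ← Finset.sum_add_distrib, ← Finset.sum_add_distrib]
        apply Finset.sum_congr rfl
        intro k' _
        simp only [Polynomial.add_comp]
        ring
      simp only [Matrix.add_apply, Matrix.mul_apply, Matrix.map_apply, Matrix.of_apply,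
        Matrix.smul_apply, smul_eq_mul, if_pos hn2]
      simp only [← Polynomial.smul_eq_C_mul]
      exact key
    · have hn1 : n = 1 := by omega
      subst hn1
      rw [if_neg hn2, Matrix.mul_zero]
      refine Matrix.ext fun i k => ?_
      have key : X * W 1 i k =
          (∑ j : Fin 3, c (3*1 + (i:ℕ)) (3*(1+1) + (j:ℕ)) • W (1+1) j k)
          + (∑ j : Fin 3, c (3*1 + (i:ℕ)) (3*1 + (j:ℕ)) • W 1 j k)
          + (∑ j : Fin 3, c (3*1 + (i:ℕ)) (3*(1-1) + (j:ℕ)) • W (1-1) j k) := by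
        apply cd_uniq (fun k => X * W 1 i k) (fun k => _ + _ + _)
        rw [← Xmul_comp P (W 1) 1 i (hW 1 i)]
        rw [scalar i, if_neg hn2, add_zero]
        rw [comb_comp P (W (1+1)) (1+1) (hW (1+1)) _,
          comb_comp P (W 1) 1 (hW 1) _,
          comb_comp P (W (1-1)) (1-1) (hW (1-1)) _]
        rw [← Finset.sum_add_distrib, ← Finset.sum_add_distrib]
        apply Finset.sum_congr rfl
        intro k' _
        simp only [Polynomial.add_comp]
        ring
      simp only [Matrix.add_apply, Matrix.mul_apply, Matrix.map_apply, Matrix.of_apply,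
        Matrix.smul_apply, smul_eq_mul, Matrix.zero_apply, add_zero]
      simp only [← Polynomial.smul_eq_C_mul]
      exact key
end

section
/- Let (W_m)_{m≥0} be 3×3 matrices of complex polynomials with deg W_m = m and invertible leading coefficient, and set ℬ_n = (W_{2n}; W_{2n+1}) (6×3 matrix polynomials). Let μ^1, μ^2 : ℕ → M_3(ℂ) be moment sequences with associated matrix moment functionals M^1, M^2, and define the 6×6 matrix 𝔐(x^k ℬ_n) with 3×3 blocks [[M^1(x^k W_{2n}), M^2(x^k W_{2n})], [M^1(x^k W_{2n+1}), M^2(x^k W_{2n+1})]]. Assume 𝔐(x^k ℬ_n) = 0 for all 0 ≤ k < n and that Ω_n := 𝔐(x^n ℬ_n) is invertible for every n ≥ 0. Then there exist 6×6 complex matrices A_n, B_n, C_n such that (with ℬ_{-1} = 0) x·ℬ_n = A_n·ℬ_{n+1} + B_n·ℬ_n + C_n·ℬ_{n-1} for all n ≥ 0, and C_n = Ω_n·Ω_{n-1}^{-1} is invertible for every n ≥ 1. -/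
/-!
Because `deg W m = m` with invertible leading coefficients, `x • ℬ n` is a left combination
`∑_{j ≤ n+1} D n j • ℬ j` with constant coefficients. The functional `𝔐` is left linear over
constant matrices, so applying `𝔐 (x ^ k • ·)` gives `𝔐(x^(k+1) ℬ n) = ∑ⱼ D n j * 𝔐(x^k ℬ j)`.
Orthogonality makes this system triangular: by induction on `k`, `D n k * Ω k = 0` and hence
`D n k = 0` for `k + 1 < n`, while `k = n - 1` gives `D n (n-1) * Ω (n-1) = Ω n`.
-/

open Polynomial

/-- The matrix moment functional associated with a sequence `μ : ℕ → M₃(ℂ)` of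
moments: it sends the 3×3 matrix polynomial `W(x) = ∑ₖ Wₖ xᵏ` to `∑ₖ Wₖ · μ k`. -/
noncomputable def matMom (μ : ℕ → Matrix (Fin 3) (Fin 3) ℂ)
    (W : Matrix (Fin 3) (Fin 3) (Polynomial ℂ)) : Matrix (Fin 3) (Fin 3) ℂ :=
  ∑ᶠ k : ℕ, (Matrix.of fun i j => (W i j).coeff k) * μ k

/-- The 6×3 matrix polynomial `ℬ n` obtained by stacking `W (2n)` on top of
`W (2n+1)`. -/
def stack (W : ℕ → Matrix (Fin 3) (Fin 3) (Polynomial ℂ)) (n : ℕ) :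
    Matrix (Fin 3 ⊕ Fin 3) (Fin 3) (Polynomial ℂ) :=
  Matrix.of (Sum.elim (W (2 * n)) (W (2 * n + 1)))

/-- The 6×6 matrix `𝔐(x^k ℬ n)` with 3×3 blocks
`[[M¹(x^k W (2n)), M²(x^k W (2n))], [M¹(x^k W (2n+1)), M²(x^k W (2n+1))]]`. -/
noncomputable def bigM (μ1 μ2 : ℕ → Matrix (Fin 3) (Fin 3) ℂ)
    (W : ℕ → Matrix (Fin 3) (Fin 3) (Polynomial ℂ)) (k n : ℕ) :
    Matrix (Fin 3 ⊕ Fin 3) (Fin 3 ⊕ Fin 3) ℂ :=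
  Matrix.fromBlocks
    (matMom μ1 ((X : ℂ[X]) ^ k • W (2 * n))) (matMom μ2 ((X : ℂ[X]) ^ k • W (2 * n)))
    (matMom μ1 ((X : ℂ[X]) ^ k • W (2 * n + 1))) (matMom μ2 ((X : ℂ[X]) ^ k • W (2 * n + 1)))

open Finset

namespace Polynomial

theorem exists_eq_sum_C_mul_of_degree_lt {A : Type*} [Ring A] {w : ℕ → A[X]}
    (hdeg : ∀ m, (w m).natDegree ≤ m) (hlead : ∀ m, IsUnit ((w m).coeff m)) :
    ∀ {d : ℕ} {p : A[X]}, p.degree < d → ∃ L : ℕ → A, p = ∑ m ∈ range d, C (L m) * w m := by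
  intro d
  induction d with
  | zero => intro p hp; exact ⟨0, by simpa using hp⟩
  | succ d ih =>
    intro p hp
    obtain ⟨u, hu⟩ := hlead d
    set c := p.coeff d * ↑u⁻¹ with hc
    have hq : (p - C c * w d).degree < d := by
      rw [degree_lt_iff_coeff_zero] at hp ⊢
      intro k hk
      rw [coeff_sub, coeff_C_mul]
      rcases hk.eq_or_lt with rfl | hlt
      · rw [← hu, hc, mul_assoc, Units.inv_mul, mul_one, sub_self]
      · rw [hp k hlt, coeff_eq_zero_of_natDegree_lt ((hdeg d).trans_lt hlt), mul_zero, sub_zero]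
    obtain ⟨L, hL⟩ := ih hq
    refine ⟨Function.update L d c, ?_⟩
    rw [sum_range_succ, Function.update_self,
      sum_congr rfl fun m hm => by rw [Function.update_of_ne (mem_range.mp hm).ne], ← hL,
      sub_add_cancel]

theorem degree_X_mul_lt {R : Type*} [Semiring R] {q : R[X]} {m d : ℕ} (hq : q.natDegree ≤ m)
    (h : m + 1 < d) : (X * q).degree < (d : WithBot ℕ) :=
  calc (X * q).degree ≤ ((X * q).natDegree : WithBot ℕ) := degree_le_natDegree
    _ ≤ ((1 + m : ℕ) : WithBot ℕ) := by
      exact_mod_cast natDegree_mul_le.trans (add_le_add natDegree_X_le hq)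
    _ < d := by exact_mod_cast (by omega)

end Polynomial

section MatrixPolynomial

variable {n R : Type*} [Fintype n] [DecidableEq n] [CommRing R]

theorem degree_matPolyEquiv_lt {P : Matrix n n R[X]} {d : ℕ} (hP : ∀ i j, (P i j).degree < d) :
    (matPolyEquiv P).degree < d := by
  simp only [degree_lt_iff_coeff_zero] at hP ⊢
  intro k hk
  ext i j
  rw [matPolyEquiv_coeff_apply, hP i j k hk, Matrix.zero_apply]

theorem Matrix.exists_eq_sum_map_C_mul_of_degree_lt {W : ℕ → Matrix n n R[X]}
    (hdeg : ∀ m i j, (W m i j).natDegree ≤ m)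
    (hlead : ∀ m, IsUnit (Matrix.of fun i j => (W m i j).coeff m)) {d : ℕ} {P : Matrix n n R[X]}
    (hP : ∀ i j, (P i j).degree < d) :
    ∃ L : ℕ → Matrix n n R, P = ∑ m ∈ range d, (L m).map C * W m := by
  have hcoeff : ∀ m k, (matPolyEquiv (W m)).coeff k = Matrix.of fun i j => (W m i j).coeff k :=
    fun m k => by ext i j; rw [matPolyEquiv_coeff_apply, Matrix.of_apply]
  obtain ⟨L, hL⟩ := exists_eq_sum_C_mul_of_degree_lt (w := fun m => matPolyEquiv (W m))
    (fun m => natDegree_le_iff_coeff_eq_zero.mpr fun k hk => by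
      rw [hcoeff]; ext i j; exact coeff_eq_zero_of_natDegree_lt ((hdeg m i j).trans_lt hk))
    (fun m => by rw [hcoeff]; exact hlead m) (degree_matPolyEquiv_lt hP)
  refine ⟨L, matPolyEquiv.injective ?_⟩
  simp only [hL, map_sum, map_mul, matPolyEquiv_map_C]

end MatrixPolynomial

section MomentFunctional

variable (μ μ1 μ2 : ℕ → Matrix (Fin 3) (Fin 3) ℂ)

theorem matMom_eq_lsum (P : Matrix (Fin 3) (Fin 3) ℂ[X]) :
    matMom μ P = lsum (fun k => LinearMap.mulRight (Matrix (Fin 3) (Fin 3) ℂ) (μ k))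
      (matPolyEquiv P) := by
  rw [lsum_apply, sum_def, matMom]
  have hcoeff : ∀ k, (Matrix.of fun i j => (P i j).coeff k) = (matPolyEquiv P).coeff k :=
    fun k => by ext i j; rw [matPolyEquiv_coeff_apply, Matrix.of_apply]
  simp_rw [hcoeff]
  exact finsum_eq_sum_of_support_subset _ fun k hk => mem_support_iff.mpr
    fun h => hk (by simp only [h, zero_mul])

theorem matMom_zero : matMom μ 0 = 0 := by
  rw [matMom_eq_lsum, map_zero, map_zero]

theorem matMom_add (P Q : Matrix (Fin 3) (Fin 3) ℂ[X]) :
    matMom μ (P + Q) = matMom μ P + matMom μ Q := by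
  simp only [matMom_eq_lsum, map_add]

theorem matMom_map_C_mul (L : Matrix (Fin 3) (Fin 3) ℂ) (P : Matrix (Fin 3) (Fin 3) ℂ[X]) :
    matMom μ (L.map C * P) = L * matMom μ P := by
  rw [matMom_eq_lsum, matMom_eq_lsum, map_mul, matPolyEquiv_map_C, ← smul_eq_C_mul, map_smul,
    smul_eq_mul]

/-- The paper's `𝔐` on `6 × 3` matrix polynomials. -/
noncomputable def vecMom :
    Matrix (Fin 3 ⊕ Fin 3) (Fin 3) ℂ[X] →+ Matrix (Fin 3 ⊕ Fin 3) (Fin 3 ⊕ Fin 3) ℂ where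
  toFun V := Matrix.fromBlocks (matMom μ1 V.toRows₁) (matMom μ2 V.toRows₁)
    (matMom μ1 V.toRows₂) (matMom μ2 V.toRows₂)
  map_zero' := by
    change Matrix.fromBlocks (matMom μ1 0) (matMom μ2 0) (matMom μ1 0) (matMom μ2 0) = 0
    rw [matMom_zero, matMom_zero, Matrix.fromBlocks_zero]
  map_add' V V' := by
    simp only [Matrix.fromBlocks_add, ← matMom_add]
    rfl

theorem bigM_eq_vecMom (W : ℕ → Matrix (Fin 3) (Fin 3) ℂ[X]) (k n : ℕ) :
    bigM μ1 μ2 W k n = vecMom μ1 μ2 ((X : ℂ[X]) ^ k • stack W n) :=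
  rfl

theorem vecMom_map_C_mul (D : Matrix (Fin 3 ⊕ Fin 3) (Fin 3 ⊕ Fin 3) ℂ)
    (V : Matrix (Fin 3 ⊕ Fin 3) (Fin 3) ℂ[X]) :
    vecMom μ1 μ2 (D.map C * V) = D * vecMom μ1 μ2 V := by
  rw [← Matrix.fromBlocks_toBlocks D, ← Matrix.fromRows_toRows V, Matrix.fromBlocks_map,
    Matrix.fromBlocks_mul_fromRows]
  simp only [vecMom, AddMonoidHom.coe_mk, ZeroHom.coe_mk, Matrix.toRows₁_fromRows,
    Matrix.toRows₂_fromRows, Matrix.fromBlocks_multiply, matMom_add, matMom_map_C_mul]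

end MomentFunctional

theorem Finset.sum_range_two_mul {M : Type*} [AddCommMonoid M] (f : ℕ → M) (d : ℕ) :
    ∑ m ∈ range (2 * d), f m = ∑ j ∈ range d, (f (2 * j) + f (2 * j + 1)) := by
  induction d with
  | zero => simp
  | succ d ih => rw [Nat.mul_succ, sum_range_succ, sum_range_succ, ih, sum_range_succ, add_assoc]

theorem Finset.sum_range_add_two_of_eq_zero {M : Type*} [AddCommMonoid M] {f : ℕ → M} {n : ℕ}
    (hf : ∀ j, j + 1 < n → f j = 0) :
    ∑ j ∈ range (n + 2), f j = f (n + 1) + f n + if 1 ≤ n then f (n - 1) else 0 := by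
  rcases n with _ | m
  · simp [sum_range_succ, add_comm]
  · rw [sum_range_succ, sum_range_succ, sum_range_succ,
      sum_eq_zero fun j hj => hf j (by simp at hj; omega)]
    simp only [zero_add, le_add_iff_nonneg_left, zero_le, if_true, Nat.add_sub_cancel]
    abel

theorem Matrix.fromRows_sum {ι m₁ m₂ n R : Type*} [AddCommMonoid R] (s : Finset ι)
    (f : ι → Matrix m₁ n R) (g : ι → Matrix m₂ n R) :
    Matrix.fromRows (∑ i ∈ s, f i) (∑ i ∈ s, g i) = ∑ i ∈ s, Matrix.fromRows (f i) (g i) := by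
  ext (i | i) j <;> simp [Matrix.sum_apply]

section Stack

variable {W : ℕ → Matrix (Fin 3) (Fin 3) ℂ[X]}

theorem stack_eq_fromRows (n : ℕ) : stack W n = Matrix.fromRows (W (2 * n)) (W (2 * n + 1)) :=
  rfl

theorem exists_eq_sum_map_C_mul_stack (hdeg : ∀ m i j, (W m i j).natDegree ≤ m)
    (hlead : ∀ m, IsUnit (Matrix.of fun i j => (W m i j).coeff m)) {d : ℕ}
    {V : Matrix (Fin 3 ⊕ Fin 3) (Fin 3) ℂ[X]} (hV : ∀ i j, (V i j).degree < (2 * d : ℕ)) :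
    ∃ D : ℕ → Matrix (Fin 3 ⊕ Fin 3) (Fin 3 ⊕ Fin 3) ℂ,
      V = ∑ j ∈ range d, (D j).map C * stack W j := by
  obtain ⟨L₁, hL₁⟩ := Matrix.exists_eq_sum_map_C_mul_of_degree_lt hdeg hlead
    (P := V.toRows₁) fun i j => hV _ j
  obtain ⟨L₂, hL₂⟩ := Matrix.exists_eq_sum_map_C_mul_of_degree_lt hdeg hlead
    (P := V.toRows₂) fun i j => hV _ j
  refine ⟨fun j => Matrix.fromBlocks (L₁ (2 * j)) (L₁ (2 * j + 1)) (L₂ (2 * j)) (L₂ (2 * j + 1)),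
    ?_⟩
  rw [← Matrix.fromRows_toRows V, hL₁, hL₂, sum_range_two_mul, sum_range_two_mul,
    Matrix.fromRows_sum]
  refine sum_congr rfl fun j _ => ?_
  rw [Matrix.fromBlocks_map, stack_eq_fromRows, Matrix.fromBlocks_mul_fromRows]

theorem exists_X_smul_stack_eq_sum (hdeg : ∀ m i j, (W m i j).natDegree ≤ m)
    (hlead : ∀ m, IsUnit (Matrix.of fun i j => (W m i j).coeff m)) (n : ℕ) :
    ∃ D : ℕ → Matrix (Fin 3 ⊕ Fin 3) (Fin 3 ⊕ Fin 3) ℂ,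
      (X : ℂ[X]) • stack W n = ∑ j ∈ range (n + 2), (D j).map C * stack W j :=
  exists_eq_sum_map_C_mul_stack hdeg hlead fun i j => by
    rcases i with i | i <;> exact degree_X_mul_lt (hdeg _ i j) (by omega)

theorem bigM_succ_eq_sum {μ1 μ2 : ℕ → Matrix (Fin 3) (Fin 3) ℂ} {n d : ℕ}
    {D : ℕ → Matrix (Fin 3 ⊕ Fin 3) (Fin 3 ⊕ Fin 3) ℂ}
    (hD : (X : ℂ[X]) • stack W n = ∑ j ∈ range d, (D j).map C * stack W j) (k : ℕ) :
    bigM μ1 μ2 W (k + 1) n = ∑ j ∈ range d, D j * bigM μ1 μ2 W k j := by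
  rw [bigM_eq_vecMom, pow_succ, mul_smul, hD, smul_sum, map_sum]
  refine sum_congr rfl fun j _ => ?_
  rw [← Matrix.mul_smul, vecMom_map_C_mul, bigM_eq_vecMom]

end Stack

section ShiftCoefficients

/- `M k n` stands for `𝔐(x^k ℬ n)` and `D n j` for the coefficient of `ℬ j` in `x • ℬ n`. -/
variable {R : Type*} [Ring R] {M D : ℕ → ℕ → R}

theorem shift_sum_eq_single (hM : ∀ n k, k < n → M k n = 0) {n k : ℕ}
    (hlow : ∀ j < k, D n j = 0) (hk : k < n + 2) :
    ∑ j ∈ range (n + 2), D n j * M k j = D n k * M k k :=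
  sum_eq_single_of_mem k (mem_range.mpr hk) fun j _ hne => (lt_or_gt_of_ne hne).elim
    (fun h => by rw [hlow j h, zero_mul]) (fun h => by rw [hM j k h, mul_zero])

theorem shift_coeff_eq_zero_of_succ_lt (hM : ∀ n k, k < n → M k n = 0)
    (hshift : ∀ n k, M (k + 1) n = ∑ j ∈ range (n + 2), D n j * M k j)
    (hΩ : ∀ n, IsUnit (M n n)) (n k : ℕ) (hk : k + 1 < n) : D n k = 0 := by
  induction k using Nat.strong_induction_on with
  | _ k ih =>
    have h := hshift n k
    rw [hM n (k + 1) hk, shift_sum_eq_single hM (fun j hj => ih j hj (by omega)) (by omega)] at h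
    exact (hΩ k).mul_left_eq_zero.mp h.symm

theorem shift_coeff_mul_self (hM : ∀ n k, k < n → M k n = 0)
    (hshift : ∀ n k, M (k + 1) n = ∑ j ∈ range (n + 2), D n j * M k j)
    (hΩ : ∀ n, IsUnit (M n n)) (m : ℕ) : D (m + 1) m * M m m = M (m + 1) (m + 1) := by
  rw [hshift, shift_sum_eq_single hM
    (fun j hj => shift_coeff_eq_zero_of_succ_lt hM hshift hΩ (m + 1) j (by omega)) (by omega)]

end ShiftCoefficients

/-- Implication (a) ⇒ (b) of the Favard-type Theorem 5.2 of the
paper: if the 3×3 matrix polynomials `W m` (degree `m`, invertible leading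
coefficient) are such that the stacked `ℬ n` are orthogonal with respect to the
vector of matrix moment functionals `(M¹, M²)` — i.e. `𝔐(x^k ℬ n) = 0` for `k < n`
and `Ω n = 𝔐(x^n ℬ n)` is invertible — then the `ℬ n` satisfy a block three-term
recurrence `x·ℬ n = A n·ℬ (n+1) + B n·ℬ n + C n·ℬ (n-1)` with
`C n = Ω n · (Ω (n-1))⁻¹` invertible for `n ≥ 1`. -/
theorem stmt_18 (W : ℕ → Matrix (Fin 3) (Fin 3) (Polynomial ℂ))
    (hdeg : ∀ m : ℕ, ∀ i j : Fin 3, (W m i j).natDegree ≤ m)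
    (hlead : ∀ m : ℕ, IsUnit (Matrix.of fun i j : Fin 3 => (W m i j).coeff m))
    (μ1 μ2 : ℕ → Matrix (Fin 3) (Fin 3) ℂ)
    (horth : ∀ n k : ℕ, k < n → bigM μ1 μ2 W k n = 0)
    (hΩ : ∀ n : ℕ, IsUnit (bigM μ1 μ2 W n n)) :
    ∃ A B Cc : ℕ → Matrix (Fin 3 ⊕ Fin 3) (Fin 3 ⊕ Fin 3) ℂ,
      (∀ n : ℕ, (X : ℂ[X]) • stack W n =
        (A n).map C * stack W (n + 1) + (B n).map C * stack W n +
        (Cc n).map C * (if 1 ≤ n then stack W (n - 1) else 0)) ∧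
      (∀ n : ℕ, 1 ≤ n →
        Cc n = bigM μ1 μ2 W n n * (bigM μ1 μ2 W (n - 1) (n - 1))⁻¹ ∧ IsUnit (Cc n)) := by
  choose D hD using exists_X_smul_stack_eq_sum hdeg hlead
  have hshift (n k : ℕ) := bigM_succ_eq_sum (μ1 := μ1) (μ2 := μ2) (hD n) k
  have hC (m : ℕ) : D (m + 1) m = bigM μ1 μ2 W (m + 1) (m + 1) * (bigM μ1 μ2 W m m)⁻¹ := by
    rw [← shift_coeff_mul_self horth hshift hΩ m, Matrix.mul_nonsing_inv_cancel_right _ _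
      ((Matrix.isUnit_iff_isUnit_det _).mp (hΩ m))]
  refine ⟨fun n => D n (n + 1), fun n => D n n, fun n => D n (n - 1), fun n => ?_,
    fun n hn => ?_⟩
  · dsimp only
    rw [hD n, sum_range_add_two_of_eq_zero fun j hj => by
      rw [shift_coeff_eq_zero_of_succ_lt horth hshift hΩ n j hj, Matrix.map_zero _ (map_zero C),
        Matrix.zero_mul]]
    split_ifs <;> simp only [Matrix.mul_zero]
  · obtain ⟨m, rfl⟩ := Nat.exists_eq_add_of_le' hn
    dsimp only
    rw [Nat.add_sub_cancel, hC m]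
    exact ⟨rfl, (hΩ _).mul (Matrix.isUnit_nonsing_inv_iff.mpr (hΩ m))⟩
end

section
/- Let (W_m)_{m≥0} be 3×3 matrices of complex polynomials with deg W_m = m and invertible leading coefficient, and set ℬ_n = (W_{2n}; W_{2n+1}) (6×3 matrix polynomials). Suppose there exist 6×6 complex matrices A_n, B_n, C_n with C_n invertible for all n ≥ 1, such that (with ℬ_{-1} = 0) x·ℬ_n = A_n·ℬ_{n+1} + B_n·ℬ_n + C_n·ℬ_{n-1} for all n ≥ 0. Then there exist moment sequences μ^1, μ^2 : ℕ → M_3(ℂ) such that, with M^1, M^2 the associated matrix moment functionals and 𝔐(x^k ℬ_n) the 6×6 matrix with 3×3 blocks [[M^1(x^k W_{2n}), M^2(x^k W_{2n})], [M^1(x^k W_{2n+1}), M^2(x^k W_{2n+1})]], one has: 𝔐(x^k ℬ_n) = 0 for all 0 ≤ k < n, 𝔐(ℬ_0) is invertible, and 𝔐(x^n ℬ_n) = C_n·C_{n-1}·⋯·C_1·𝔐(ℬ_0) is invertible for every n ≥ 1. -/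
/-!
Choose the moments so that `M¹` and `M²` are dual to `W₀` and `W₁` and vanish on every other
`W_m`; since `W_m` has degree `m` and invertible leading coefficient, the moments can be solved
for one at a time. Then `𝔐(ℬ₀) = 1` and `𝔐(ℬ_n) = 0` for `n ≥ 1`. Applying the functionals to
`x^k` times the recurrence gives
`𝔐(x^{k+1} ℬ_n) = A_n 𝔐(x^k ℬ_{n+1}) + B_n 𝔐(x^k ℬ_n) + C_n 𝔐(x^k ℬ_{n-1})`,
and induction on `k` yields both the vanishing below the diagonal and the diagonal formula.
-/

open Polynomial

namespace Matrix

section MomentFunctional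

variable {R : Type*} [Semiring R] {l m n p : Type*} [Fintype n]

noncomputable def momentFunctional (μ : ℕ → Matrix n p R) (V : Matrix m n R[X]) :
    Matrix m p R :=
  ∑ᶠ k, V.map (fun q => q.coeff k) * μ k

theorem finite_support_map_coeff_mul [Finite m] (μ : ℕ → Matrix n p R) (V : Matrix m n R[X]) :
    (Function.support fun k => V.map (fun q => q.coeff k) * μ k).Finite := by
  refine (Set.finite_iUnion fun i => Set.finite_iUnion fun j =>
    (V i j).support.finite_toSet).subset ?_
  intro k hk
  obtain ⟨i, j, hij⟩ : ∃ i j, (V i j).coeff k ≠ 0 := by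
    by_contra! h
    exact hk (by simp [show V.map (fun q => q.coeff k) = 0 from ext h])
  simpa using ⟨i, j, hij⟩

theorem momentFunctional_apply [Finite m] (μ : ℕ → Matrix n p R) (V : Matrix m n R[X])
    (i : m) (j : p) :
    momentFunctional μ V i j = ∑ᶠ k, ∑ l, (V i l).coeff k * μ k l j :=
  (entryAddMonoidHom R i j).map_finsum (finite_support_map_coeff_mul μ V)

theorem momentFunctional_eq_sum_range (μ : ℕ → Matrix n p R) {V : Matrix m n R[X]} {N : ℕ}
    (hV : ∀ i j, (V i j).natDegree < N) :
    momentFunctional μ V = ∑ k ∈ Finset.range N, V.map (fun q => q.coeff k) * μ k := by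
  refine finsum_eq_sum_of_support_subset _ fun k hk => ?_
  by_contra hkN
  refine hk ?_
  have : V.map (fun q => q.coeff k) = 0 :=
    ext fun i j => coeff_eq_zero_of_natDegree_lt <| (hV i j).trans_le (by simpa using hkN)
  simp [this]

theorem momentFunctional_add [Finite m] (μ : ℕ → Matrix n p R) (V V' : Matrix m n R[X]) :
    momentFunctional μ (V + V') = momentFunctional μ V + momentFunctional μ V' := by
  simp only [momentFunctional]
  rw [← finsum_add_distrib (finite_support_map_coeff_mul μ V)
    (finite_support_map_coeff_mul μ V')]
  refine finsum_congr fun k => ?_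
  rw [← Matrix.add_mul, ← Matrix.map_add _ fun q q' => coeff_add q q' k]

theorem momentFunctional_map_C_mul [Fintype m] (μ : ℕ → Matrix n p R) (P : Matrix l m R)
    (V : Matrix m n R[X]) :
    momentFunctional μ (P.map C * V) = P * momentFunctional μ V := by
  simp only [momentFunctional]
  rw [← addMonoidHomMulLeft_apply P,
    (addMonoidHomMulLeft P).map_finsum (finite_support_map_coeff_mul μ V)]
  refine finsum_congr fun k => ?_
  rw [addMonoidHomMulLeft_apply, ← Matrix.mul_assoc]
  congr 1
  ext i j
  simp [mul_apply]

variable {m₁ m₂ p₁ p₂ : Type*} [Finite m₁] [Finite m₂]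

theorem momentFunctional_fromRows (μ : ℕ → Matrix n p R) (V₁ : Matrix m₁ n R[X])
    (V₂ : Matrix m₂ n R[X]) :
    momentFunctional μ (fromRows V₁ V₂) =
      fromRows (momentFunctional μ V₁) (momentFunctional μ V₂) := by
  ext (i | i) j <;> simp [momentFunctional_apply]

theorem momentFunctional_fromCols [Finite m] (μ₁ : ℕ → Matrix n p₁ R) (μ₂ : ℕ → Matrix n p₂ R)
    (V : Matrix m n R[X]) :
    momentFunctional (fun k => fromCols (μ₁ k) (μ₂ k)) V =
      fromCols (momentFunctional μ₁ V) (momentFunctional μ₂ V) := by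
  ext i (j | j) <;> simp [momentFunctional_apply]

end MomentFunctional

section DualMoments

variable {R : Type*} [Ring R] {n p : Type*} [Fintype n] [DecidableEq n]

/-- Forward substitution in the triangular system `∑_{j ≤ m} (W m)ⱼ * μ j = T m`. -/
noncomputable def dualMoments (W : ℕ → Matrix n n R[X]) (T : ℕ → Matrix n p R) :
    ℕ → Matrix n p R
  | m => Ring.inverse ((W m).map fun q => q.coeff m) *
      (T m - ∑ j : Fin m, (W m).map (fun q => q.coeff j) * dualMoments W T j)

theorem momentFunctional_dualMoments (W : ℕ → Matrix n n R[X]) (T : ℕ → Matrix n p R)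
    (hdeg : ∀ m i j, (W m i j).natDegree ≤ m)
    (hlead : ∀ m, IsUnit ((W m).map fun q => q.coeff m)) (m : ℕ) :
    momentFunctional (dualMoments W T) (W m) = T m := by
  rw [momentFunctional_eq_sum_range _ fun i j => Nat.lt_succ_of_le (hdeg m i j),
    Finset.sum_range_succ, dualMoments, ← Matrix.mul_assoc, Ring.mul_inverse_cancel _ (hlead m),
    Matrix.one_mul,
    Fin.sum_univ_eq_sum_range (fun j => (W m).map (fun q => q.coeff j) * dualMoments W T j)]
  abel

end DualMoments

end Matrix

section ThreeTermRecurrence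

variable {α : Type*} [Semiring α] {M : ℕ → ℕ → α} {a b c : ℕ → α}

theorem threeTerm_eq_zero_of_lt (hzero : ∀ n, M 0 (n + 1) = 0)
    (hstep : ∀ k n, M (k + 1) (n + 1) =
      a (n + 1) * M k (n + 2) + b (n + 1) * M k (n + 1) + c (n + 1) * M k n) :
    ∀ {k n : ℕ}, k < n → M k n = 0
  | 0, n + 1, _ => hzero n
  | k + 1, n + 1, h => by
    rw [hstep, threeTerm_eq_zero_of_lt hzero hstep (by omega : k < n + 2),
      threeTerm_eq_zero_of_lt hzero hstep (by omega : k < n + 1),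
      threeTerm_eq_zero_of_lt hzero hstep (by omega : k < n)]
    simp

theorem threeTerm_diag (hzero : ∀ n, M 0 (n + 1) = 0)
    (hstep : ∀ k n, M (k + 1) (n + 1) =
      a (n + 1) * M k (n + 2) + b (n + 1) * M k (n + 1) + c (n + 1) * M k n) (n : ℕ) :
    M n n = ((List.range n).map fun j => c (n - j)).prod * M 0 0 := by
  induction n with
  | zero => simp
  | succ n ih =>
    rw [hstep, threeTerm_eq_zero_of_lt hzero hstep (by omega : n < n + 2),
      threeTerm_eq_zero_of_lt hzero hstep (by omega : n < n + 1), ih, List.prod_range_succ']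
    simp [mul_assoc]

end ThreeTermRecurrence

open Matrix

section StackedMoments

variable (μ1 μ2 : ℕ → Matrix (Fin 3) (Fin 3) ℂ) (W : ℕ → Matrix (Fin 3) (Fin 3) ℂ[X])

theorem matMom_eq_momentFunctional : matMom = momentFunctional (R := ℂ) (m := Fin 3) := rfl

/-- The pair `(M¹, M²)` is a single moment functional with `3 × 6` moments. -/
theorem bigM_eq_momentFunctional (k n : ℕ) :
    bigM μ1 μ2 W k n =
      momentFunctional (fun j => fromCols (μ1 j) (μ2 j)) ((X : ℂ[X]) ^ k • stack W n) := by
  have hstack : (X : ℂ[X]) ^ k • stack W n =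
      fromRows ((X : ℂ[X]) ^ k • W (2 * n)) ((X : ℂ[X]) ^ k • W (2 * n + 1)) := by
    ext (i | i) j <;> rfl
  rw [hstack, momentFunctional_fromCols, momentFunctional_fromRows, momentFunctional_fromRows,
    fromCols_fromRows_eq_fromBlocks]
  rfl

variable {μ1 μ2 W}

theorem bigM_zero_left (hμ1 : ∀ m, momentFunctional μ1 (W m) = if m = 0 then 1 else 0)
    (hμ2 : ∀ m, momentFunctional μ2 (W m) = if m = 1 then 1 else 0) (n : ℕ) :
    bigM μ1 μ2 W 0 n = if n = 0 then 1 else 0 := by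
  rcases n with _ | n
  · simp [bigM, matMom_eq_momentFunctional, hμ1, hμ2, fromBlocks_one]
  · simp [bigM, matMom_eq_momentFunctional, hμ1, hμ2, fromBlocks_zero]

theorem bigM_succ_succ {A B Cc : ℕ → Matrix (Fin 3 ⊕ Fin 3) (Fin 3 ⊕ Fin 3) ℂ} {n : ℕ}
    (hrec : (X : ℂ[X]) • stack W (n + 1) =
      (A (n + 1)).map C * stack W (n + 2) + (B (n + 1)).map C * stack W (n + 1) +
        (Cc (n + 1)).map C * stack W n) (k : ℕ) :
    bigM μ1 μ2 W (k + 1) (n + 1) = A (n + 1) * bigM μ1 μ2 W k (n + 2) +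
      B (n + 1) * bigM μ1 μ2 W k (n + 1) + Cc (n + 1) * bigM μ1 μ2 W k n := by
  simp only [bigM_eq_momentFunctional, pow_succ, mul_smul, hrec, smul_add, ← Matrix.mul_smul,
    momentFunctional_add, momentFunctional_map_C_mul]

end StackedMoments

/-- Implication (b) ⇒ (a) of the Favard-type Theorem 5.2 of the
paper: if the 3×3 matrix polynomials `W m` (degree `m`, invertible leading
coefficient) are such that the stacked `ℬ n` satisfy a block three-term recurrence
`x·ℬ n = A n·ℬ (n+1) + B n·ℬ n + C n·ℬ (n-1)` (with `ℬ (-1) = 0`) where each `C n`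
(`n ≥ 1`) is invertible, then there are moment sequences `μ1, μ2` such that
`𝔐(x^k ℬ n) = 0` for `k < n`, `𝔐(ℬ 0)` is invertible, and
`𝔐(x^n ℬ n) = C n · C (n-1) ⋯ C 1 · 𝔐(ℬ 0)` is invertible for every `n ≥ 1`. -/
theorem stmt_19 (W : ℕ → Matrix (Fin 3) (Fin 3) (Polynomial ℂ))
    (hdeg : ∀ m : ℕ, ∀ i j : Fin 3, (W m i j).natDegree ≤ m)
    (hlead : ∀ m : ℕ, IsUnit (Matrix.of fun i j : Fin 3 => (W m i j).coeff m))
    (A B Cc : ℕ → Matrix (Fin 3 ⊕ Fin 3) (Fin 3 ⊕ Fin 3) ℂ)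
    (hCc : ∀ n : ℕ, 1 ≤ n → IsUnit (Cc n))
    (hrec : ∀ n : ℕ, (X : ℂ[X]) • stack W n =
      (A n).map C * stack W (n + 1) + (B n).map C * stack W n +
      (Cc n).map C * (if 1 ≤ n then stack W (n - 1) else 0)) :
    ∃ μ1 μ2 : ℕ → Matrix (Fin 3) (Fin 3) ℂ,
      (∀ n k : ℕ, k < n → bigM μ1 μ2 W k n = 0) ∧
      IsUnit (bigM μ1 μ2 W 0 0) ∧
      ∀ n : ℕ, 1 ≤ n →
        bigM μ1 μ2 W n n =
          (((List.range n).map fun k => Cc (n - k)).prod) * bigM μ1 μ2 W 0 0 ∧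
        IsUnit (bigM μ1 μ2 W n n) := by
  set μ1 := dualMoments W fun m => if m = 0 then (1 : Matrix (Fin 3) (Fin 3) ℂ) else 0
  set μ2 := dualMoments W fun m => if m = 1 then (1 : Matrix (Fin 3) (Fin 3) ℂ) else 0
  have hzero : ∀ n, bigM μ1 μ2 W 0 n = if n = 0 then 1 else 0 :=
    bigM_zero_left (momentFunctional_dualMoments W _ hdeg hlead)
      (momentFunctional_dualMoments W _ hdeg hlead)
  have hzero_succ : ∀ n, bigM μ1 μ2 W 0 (n + 1) = 0 := fun n => by simp [hzero]
  have hstep := fun k n => bigM_succ_succ (μ1 := μ1) (μ2 := μ2) (by simpa using hrec (n + 1)) k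
  have hunit : IsUnit (bigM μ1 μ2 W 0 0) := by simp [hzero]
  refine ⟨μ1, μ2, fun _ _ => threeTerm_eq_zero_of_lt hzero_succ hstep, hunit,
    fun n _ => ⟨threeTerm_diag hzero_succ hstep n, ?_⟩⟩
  rw [threeTerm_diag hzero_succ hstep n]
  refine (List.prod_isUnit fun u hu => ?_).mul hunit
  obtain ⟨j, hj, rfl⟩ := List.mem_map.1 hu
  exact hCc _ (by simp at hj; omega)
end
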